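/- arXiv:1302.0378 — 10 statements merged into one kernel-verified Lean document; each statement's English description precedes it below -/
import Mathlib

section
/- Let k,l be positive integers, a_1,…,a_k and b_1,…,b_l positive integers, and x_1,…,x_k, y_1,…,y_l nonzero real numbers. Then for every positive integer n, the product of two S-sums with the same upper summation limit satisfies the quasi-shuffle relation: S_{a_1,…,a_k}(x_1,…,x_k;n) · S_{b_1,…,b_l}(y_1,…,y_l;n) = Σ_{i=1}^{n} (x_1^i/i^{a_1}) S_{a_2,…,a_k}(x_2,…,x_k;i) S_{b_1,…,b_l}(y_1,…,y_l;i) + Σ_{i=1}^{n} (y_1^i/i^{b_1}) S_{a_1,…,a_k}(x_1,…,x_k;i) S_{b_2,…,b_l}(y_2,…,y_l;i) − Σ_{i=1}^{n} ((x_1·y_1)^i/i^{a_1+b_1}) S_{a_2,…,a_k}(x_2,…,x_k;i) S_{b_2,…,b_l}(y_2,…,y_l;i), where an S-sum with an empty index list equals 1. -/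
/-- The generalized harmonic sum (`S`-sum); an empty index list gives the value `1`. -/
noncomputable def Ssum : List (ℕ × ℝ) → ℕ → ℝ
  | [], _ => 1
  | (a, x) :: p, n => ∑ i ∈ Finset.Icc 1 n, x ^ i / (i : ℝ) ^ a * Ssum p i

lemma sum_mul_sum_key (f g : ℕ → ℝ) (n : ℕ) :
    (∑ i ∈ Finset.Icc 1 n, f i) * (∑ i ∈ Finset.Icc 1 n, g i) =
      (∑ i ∈ Finset.Icc 1 n, f i * ∑ j ∈ Finset.Icc 1 i, g j)
      + (∑ i ∈ Finset.Icc 1 n, g i * ∑ j ∈ Finset.Icc 1 i, f j)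
      - ∑ i ∈ Finset.Icc 1 n, f i * g i := by
  induction n with
  | zero => simp
  | succ n ih =>
    simp only [Finset.sum_Icc_succ_top (show 1 ≤ n + 1 by omega)]
    linear_combination ih

/-- Quasi-shuffle (stuffle) relation for the product of two `S`-sums with the same
upper summation limit. -/
theorem ssum_quasi_shuffle (a₁ b₁ : ℕ) (x₁ y₁ : ℝ) (p q : List (ℕ × ℝ))
    (ha₁ : 1 ≤ a₁) (hb₁ : 1 ≤ b₁) (hx₁ : x₁ ≠ 0) (hy₁ : y₁ ≠ 0)
    (hp : ∀ e ∈ p, 1 ≤ e.1 ∧ e.2 ≠ 0) (hq : ∀ e ∈ q, 1 ≤ e.1 ∧ e.2 ≠ 0)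
    (n : ℕ) (hn : 1 ≤ n) :
    Ssum ((a₁, x₁) :: p) n * Ssum ((b₁, y₁) :: q) n =
      (∑ i ∈ Finset.Icc 1 n, x₁ ^ i / (i : ℝ) ^ a₁ * Ssum p i * Ssum ((b₁, y₁) :: q) i)
      + (∑ i ∈ Finset.Icc 1 n, y₁ ^ i / (i : ℝ) ^ b₁ * Ssum ((a₁, x₁) :: p) i * Ssum q i)
      - (∑ i ∈ Finset.Icc 1 n, (x₁ * y₁) ^ i / (i : ℝ) ^ (a₁ + b₁) * Ssum p i * Ssum q i) := by
  have key := sum_mul_sum_key (fun i => x₁ ^ i / (i : ℝ) ^ a₁ * Ssum p i)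
    (fun i => y₁ ^ i / (i : ℝ) ^ b₁ * Ssum q i) n
  have h1 : (∑ i ∈ Finset.Icc 1 n, x₁ ^ i / (i : ℝ) ^ a₁ * Ssum p i * Ssum ((b₁, y₁) :: q) i)
      = ∑ i ∈ Finset.Icc 1 n, x₁ ^ i / (i : ℝ) ^ a₁ * Ssum p i *
          ∑ j ∈ Finset.Icc 1 i, y₁ ^ j / (j : ℝ) ^ b₁ * Ssum q j :=
    Finset.sum_congr rfl fun i _ => by rw [Ssum]
  have h2 : (∑ i ∈ Finset.Icc 1 n, y₁ ^ i / (i : ℝ) ^ b₁ * Ssum ((a₁, x₁) :: p) i * Ssum q i)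
      = ∑ i ∈ Finset.Icc 1 n, y₁ ^ i / (i : ℝ) ^ b₁ * Ssum q i *
          ∑ j ∈ Finset.Icc 1 i, x₁ ^ j / (j : ℝ) ^ a₁ * Ssum p j :=
    Finset.sum_congr rfl fun i _ => by rw [Ssum]; ring
  have h3 : (∑ i ∈ Finset.Icc 1 n, (x₁ * y₁) ^ i / (i : ℝ) ^ (a₁ + b₁) * Ssum p i * Ssum q i)
      = ∑ i ∈ Finset.Icc 1 n, (x₁ ^ i / (i : ℝ) ^ a₁ * Ssum p i) *
          (y₁ ^ i / (i : ℝ) ^ b₁ * Ssum q i) :=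
    Finset.sum_congr rfl fun i _ => by simp only [mul_pow, pow_add]; ring
  rw [h1, h2, h3]
  show (∑ i ∈ Finset.Icc 1 n, x₁ ^ i / (i : ℝ) ^ a₁ * Ssum p i) *
      (∑ i ∈ Finset.Icc 1 n, y₁ ^ i / (i : ℝ) ^ b₁ * Ssum q i) = _
  exact key
end

section
/- Let m be a positive integer, b a nonzero real number, and n a positive integer. Then the depth-1 S-sum S_m(b;n) = Σ_{i=1}^{n} b^i/i^m has the iterated integral representation S_m(b;n) = ∫_0^b (1/x_m) ∫_0^{x_m} (1/x_{m−1}) ⋯ ∫_0^{x_3} (1/x_2) ∫_0^{x_2} (x_1^n − 1)/(x_1 − 1) dx_1 dx_2 ⋯ dx_m; in particular, for m=1, S_1(b;n) = ∫_0^b (x^n − 1)/(x − 1) dx. -/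
open intervalIntegral

/-- The iterated integral
`Jint m n b = ∫_0^b (1/x_m) ∫_0^{x_m} (1/x_{m−1}) ⋯ ∫_0^{x_2} (x₁^n−1)/(x₁−1) dx₁ ⋯ dx_m`
(oriented integrals). -/
noncomputable def Jint : ℕ → ℕ → ℝ → ℝ
  | 0, _, _ => 0
  | 1, n, b => ∫ x in (0:ℝ)..b, (x ^ n - 1) / (x - 1)
  | (m + 2), n, b => ∫ x in (0:ℝ)..b, (1 / x) * Jint (m + 1) n x

/-!
Both integrands met along the way, `(x^n - 1)/(x - 1)` and `(1/x) · ∑ x^i / i^a`, agree off a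
single point with a polynomial `∑_{i=1}^n x^(i-1) / i^a`, and `∫_0^b x^(i-1) dx = b^i / i`.
So each integration `∫_0^b (1/x) ⋯ dx` raises the power of `i` in the denominator of
`S_a(b;n) = ∑ b^i / i^a` by one, starting from `S_1(b;n) = ∫_0^b (x^n - 1)/(x - 1) dx`.
-/

open Finset

theorem Ssum_singleton (a : ℕ) (x : ℝ) (n : ℕ) :
    Ssum [(a, x)] n = ∑ i ∈ Icc 1 n, x ^ i / (i : ℝ) ^ a := by
  simp [Ssum]

theorem intervalIntegral.integral_congr_of_ne {E : Type*} [NormedAddCommGroup E]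
    [NormedSpace ℝ E] {f g : ℝ → E} {a b : ℝ} (c : ℝ) (h : ∀ x, x ≠ c → f x = g x) :
    ∫ x in a..b, f x = ∫ x in a..b, g x :=
  integral_congr_ae <| (MeasureTheory.volume.ae_ne c).mono fun x hx _ => h x hx

theorem sum_Icc_pow_sub_one_eq_geom {x : ℝ} (hx : x ≠ 1) (n : ℕ) :
    ∑ i ∈ Icc 1 n, x ^ (i - 1) = (x ^ n - 1) / (x - 1) := by
  rw [← Ico_add_one_right_eq_Icc, sum_Ico_eq_sum_range, ← geom_sum_eq hx]
  simp

theorem integral_sum_pow_sub_one_div (n a : ℕ) (b : ℝ) :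
    ∫ x in (0:ℝ)..b, ∑ i ∈ Icc 1 n, x ^ (i - 1) / (i : ℝ) ^ a
      = ∑ i ∈ Icc 1 n, b ^ i / (i : ℝ) ^ (a + 1) := by
  rw [integral_finsetSum fun i _ => (intervalIntegrable_pow _).div_const _]
  refine sum_congr rfl fun i hi => ?_
  have hi : 1 ≤ i := (mem_Icc.1 hi).1
  rw [intervalIntegral.integral_div, integral_pow, Nat.sub_add_cancel hi, zero_pow (by omega),
    Nat.cast_sub hi, Nat.cast_one, sub_add_cancel, sub_zero, pow_succ, div_div,
    mul_comm (_ ^ a)]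

theorem one_div_mul_sum_pow_div {x : ℝ} (hx : x ≠ 0) (n a : ℕ) :
    1 / x * ∑ i ∈ Icc 1 n, x ^ i / (i : ℝ) ^ a
      = ∑ i ∈ Icc 1 n, x ^ (i - 1) / (i : ℝ) ^ a := by
  rw [mul_sum]
  refine sum_congr rfl fun i hi => ?_
  rw [← Nat.sub_add_cancel (mem_Icc.1 hi).1, pow_succ]
  field_simp
  simp

theorem Jint_succ_eq_Ssum (m n : ℕ) (b : ℝ) : Jint (m + 1) n b = Ssum [(m + 1, b)] n := by
  induction m generalizing b with
  | zero =>
    rw [Ssum_singleton, ← integral_sum_pow_sub_one_div]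
    exact integral_congr_of_ne 1 fun x hx => by simp [sum_Icc_pow_sub_one_eq_geom hx]
  | succ m ih =>
    simp only [Jint, ih, Ssum_singleton]
    rw [← integral_sum_pow_sub_one_div]
    exact integral_congr_of_ne 0 fun x hx => one_div_mul_sum_pow_div hx n (m + 1)

theorem ssum_depth_one_integral_rep_general (m : ℕ) (hm : 1 ≤ m) (b : ℝ) (n : ℕ) :
    Ssum [(m, b)] n = Jint m n b ∧
    Ssum [(1, b)] n = ∫ x in (0:ℝ)..b, (x ^ n - 1) / (x - 1) := by
  obtain ⟨k, rfl⟩ := Nat.exists_eq_add_of_le' hm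
  exact ⟨(Jint_succ_eq_Ssum k n b).symm, (Jint_succ_eq_Ssum 0 n b).symm⟩

/-- Iterated integral representation of the depth-1 `S`-sum `S_m(b;n)`;
in particular for `m = 1`, `S_1(b;n) = ∫_0^b (x^n − 1)/(x − 1) dx`. -/
theorem ssum_depth_one_integral_rep (m : ℕ) (hm : 1 ≤ m) (b : ℝ) (hb : b ≠ 0)
    (n : ℕ) (hn : 1 ≤ n) :
    Ssum [(m, b)] n = Jint m n b ∧
    Ssum [(1, b)] n = ∫ x in (0:ℝ)..b, (x ^ n - 1) / (x - 1) :=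
  ssum_depth_one_integral_rep_general m hm b n
end

section
/- Let a and b be nonzero real numbers and n a positive integer. Then the S-sum S_{2,1}(a,b;n) = Σ_{j=1}^{n} (a^j/j^2) Σ_{i=1}^{j} b^i/i has the integral representation S_{2,1}(a,b;n) = ∫_0^{ab} (1/(x − a)) [ ∫_a^{x} (1/y) ∫_0^{y} (z^n − 1)/(z − 1) dz dy ] dx, where the inner double integral vanishes at x = a, so the integrand extends continuously across x = a. -/
/-!
Every integrand is a polynomial away from a single point: `(z ^ n - 1) / (z - 1)` is the
geometric sum `∑ z ^ k` for `z ≠ 1`, `y⁻¹ * ∑ y ^ (k + 1) / (k + 1)` is a polynomial for `y ≠ 0`,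
and `(x ^ (k + 1) - a ^ (k + 1)) / (x - a) = ∑ x ^ j * a ^ (k - j)` for `x ≠ a`. Since a point
is Lebesgue-null, the three integrals can be computed termwise, and with upper limit `a * b`
the resulting double sum is `∑_k a ^ (k + 1) / (k + 1) ^ 2 * ∑_{j ≤ k} b ^ (j + 1) / (j + 1)`.
-/

open intervalIntegral

open Finset

lemma Finset.sum_Icc_one_eq_sum_range {M : Type*} [AddCommMonoid M] (f : ℕ → M) (n : ℕ) :
    ∑ i ∈ Icc 1 n, f i = ∑ k ∈ range n, f (k + 1) := by
  rw [← Ico_add_one_right_eq_Icc, sum_Ico_eq_sum_range, Nat.add_sub_cancel]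
  simp only [add_comm 1]

lemma intervalIntegral.integral_congr_of_forall_ne {E : Type*} [NormedAddCommGroup E]
    [NormedSpace ℝ E] (c : ℝ) {f g : ℝ → E} (h : ∀ x ≠ c, f x = g x) (u v : ℝ) :
    ∫ x in u..v, f x = ∫ x in u..v, g x :=
  integral_congr_ae <|
    (MeasureTheory.Measure.ae_ne MeasureTheory.volume c).mono fun x hx _ => h x hx

theorem integral_geom_quotient (n : ℕ) (y : ℝ) :
    ∫ z in (0:ℝ)..y, (z ^ n - 1) / (z - 1) = ∑ k ∈ range n, y ^ (k + 1) / (k + 1) := by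
  rw [integral_congr_of_forall_ne 1 (fun z hz => (geom_sum_eq hz n).symm),
    integral_finsetSum fun k _ => (continuous_pow k).intervalIntegrable _ _]
  simp [integral_pow]

theorem integral_inv_mul_sum_pow_div (a x : ℝ) (n : ℕ) (d : ℕ → ℝ) :
    ∫ y in a..x, 1 / y * ∑ k ∈ range n, y ^ (k + 1) / d k =
      ∑ k ∈ range n, (x ^ (k + 1) - a ^ (k + 1)) / (d k * (k + 1)) := by
  have off_zero : ∀ y ≠ 0, 1 / y * ∑ k ∈ range n, y ^ (k + 1) / d k =
      ∑ k ∈ range n, y ^ k / d k := fun y hy => by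
    rw [mul_sum]
    refine sum_congr rfl fun k _ => ?_
    field_simp
    ring
  rw [integral_congr_of_forall_ne 0 off_zero,
    integral_finsetSum fun k _ => ((continuous_pow k).div_const _).intervalIntegrable _ _]
  refine sum_congr rfl fun k _ => ?_
  rw [intervalIntegral.integral_div, integral_pow, div_div, mul_comm (d k)]

theorem integral_inv_sub_mul_sum_pow_sub_pow_div (a c : ℝ) (n : ℕ) (e : ℕ → ℝ) :
    ∫ x in (0:ℝ)..c, 1 / (x - a) * ∑ k ∈ range n, (x ^ (k + 1) - a ^ (k + 1)) / e k =
      ∑ k ∈ range n, (∑ j ∈ range (k + 1), a ^ (k - j) * c ^ (j + 1) / (j + 1)) / e k := by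
  have off_a : ∀ x ≠ a, 1 / (x - a) * ∑ k ∈ range n, (x ^ (k + 1) - a ^ (k + 1)) / e k =
      ∑ k ∈ range n, (∑ j ∈ range (k + 1), x ^ j * a ^ (k - j)) / e k := fun x hx => by
    rw [mul_sum]
    refine sum_congr rfl fun k _ => ?_
    rw [← geom_sum₂_mul x a (k + 1)]
    field_simp [sub_ne_zero.mpr hx]
    rw [add_tsub_cancel_right]
  rw [integral_congr_of_forall_ne a off_a,
    integral_finsetSum fun k _ => (Continuous.intervalIntegrable (by fun_prop) _ _)]
  refine sum_congr rfl fun k _ => ?_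
  rw [intervalIntegral.integral_div,
    integral_finsetSum fun j _ => (Continuous.intervalIntegrable (by fun_prop) _ _)]
  congr 1
  refine sum_congr rfl fun j _ => ?_
  rw [integral_mul_const, integral_pow, zero_pow j.succ_ne_zero, sub_zero]
  ring

theorem Ssum_two_one (a b : ℝ) (n : ℕ) :
    Ssum [(2, a), (1, b)] n =
      ∑ k ∈ range n, (∑ j ∈ range (k + 1), a ^ (k + 1) * b ^ (j + 1) / (j + 1)) /
        ((k + 1) * (k + 1)) := by
  simp only [Ssum, sum_Icc_one_eq_sum_range, pow_one, mul_one]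
  refine sum_congr rfl fun k _ => ?_
  rw [mul_sum, sum_div]
  refine sum_congr rfl fun j _ => ?_
  push_cast
  ring

theorem ssum_two_one_integral_rep_general (a b : ℝ) (n : ℕ) :
    Ssum [(2, a), (1, b)] n =
      ∫ x in (0:ℝ)..(a * b), (1 / (x - a)) *
        ∫ y in a..x, (1 / y) * ∫ z in (0:ℝ)..y, (z ^ n - 1) / (z - 1) := by
  simp only [integral_geom_quotient, integral_inv_mul_sum_pow_div,
    integral_inv_sub_mul_sum_pow_sub_pow_div, Ssum_two_one]
  refine sum_congr rfl fun k _ => ?_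
  congr 1
  refine sum_congr rfl fun j hj => ?_
  have hjk : j ≤ k := Nat.lt_succ_iff.mp (mem_range.mp hj)
  rw [mul_pow, ← mul_assoc, ← pow_add, ← add_assoc, Nat.sub_add_cancel hjk]

/-- Integral representation of `S_{2,1}(a,b;n)`:
`S_{2,1}(a,b;n) = ∫_0^{ab} (1/(x−a)) ∫_a^x (1/y) ∫_0^y (z^n−1)/(z−1) dz dy dx`
(all integrals oriented). -/
theorem ssum_two_one_integral_rep (a b : ℝ) (ha : a ≠ 0) (hb : b ≠ 0)
    (n : ℕ) (hn : 1 ≤ n) :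
    Ssum [(2, a), (1, b)] n =
      ∫ x in (0:ℝ)..(a * b), (1 / (x - a)) *
        ∫ y in a..x, (1 / y) * ∫ z in (0:ℝ)..y, (z ^ n - 1) / (z - 1) :=
  ssum_two_one_integral_rep_general a b n
end

section
/- Let l ≥ 2 and (m_1,…,m_l) = (1,0,…,0) (a one followed by l−1 zeros), and let x > 0 be such that H_{m_1,…,m_l}(x+1) is defined. Then H_{1,0,…,0}(x+1) = H_{1,0,…,0}(1) − H_{0,−1,…,−1}(x), where the second word is (0,−1,…,−1) of length l (a zero followed by l−1 entries equal to −1). -/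
open scoped Classical
open MeasureTheory intervalIntegral Filter

/-- The weight-one integrand: `f_0(x) = 1/x` and `f_a(x) = 1/(|a| − sign(a)·x)` for `a ≠ 0`. -/
noncomputable def GHf (a x : ℝ) : ℝ :=
  if a = 0 then 1 / x else 1 / (|a| - Real.sign a * x)

/-- The generalized harmonic polylogarithm `H_{m₁,…,m_w}(x)`: `1` for the empty word,
`(log x)^w / w!` for the all-zero word (note `Real.log` of a negative number equals the
log of its absolute value), and otherwise the oriented iterated integral
`∫_0^x f_{m₁}(y) H_{m₂,…,m_w}(y) dy`. -/
noncomputable def GH : List ℝ → ℝ → ℝ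
  | [], _ => 1
  | m :: p, x =>
    if m = 0 ∧ ∀ y ∈ p, y = (0:ℝ) then
      Real.log x ^ (p.length + 1) / ((p.length + 1).factorial : ℝ)
    else ∫ y in (0:ℝ)..x, GHf m y * GH p y

/-- `GHDef m⃗ x` states that the generalized harmonic polylogarithm `H_{m⃗}(x)` is
defined, i.e. all occurring iterated integrals converge. -/
def GHDef : List ℝ → ℝ → Prop
  | [], _ => True
  | m :: p, x =>
    (m = 0 ∧ ∀ y ∈ p, y = (0:ℝ)) ∨
    ((∀ y ∈ Set.uIoc (0:ℝ) x, GHDef p y) ∧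
      IntervalIntegrable (fun y => GHf m y * GH p y) MeasureTheory.volume 0 x)

/-! Split `∫_0^{x+1}` at `1` and substitute `y ↦ y + 1` on `[1, x+1]`. Since
`f_1(y+1) = -f_0(y)` and `log(1+y)^t/t! = H_{-1,…,-1}(y)`, the second piece is
`-H_{0,-1,…,-1}(x)`, while the first is `H_{1,0,…,0}(1)`. -/

open Real
open scoped Nat

lemma GHf_zero (y : ℝ) : GHf 0 y = 1 / y := if_pos rfl

lemma GHf_of_pos {a : ℝ} (ha : 0 < a) (y : ℝ) : GHf a y = 1 / (a - y) := by
  rw [GHf, if_neg ha.ne', abs_of_pos ha, Real.sign_of_pos ha, one_mul]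

lemma GHf_of_neg {a : ℝ} (ha : a < 0) (y : ℝ) : GHf a y = 1 / (y - a) := by
  rw [GHf, if_neg ha.ne, abs_of_neg ha, Real.sign_of_neg ha]
  ring_nf

lemma GHf_one_add_one (y : ℝ) : GHf 1 (y + 1) = -GHf 0 y := by
  rw [GHf_of_pos one_pos, GHf_zero, sub_add_cancel_right, div_neg]

lemma GH_cons_of_not_forall_zero {m : ℝ} {p : List ℝ} (h : ¬(m = 0 ∧ ∀ y ∈ p, y = 0))
    (x : ℝ) : GH (m :: p) x = ∫ y in (0:ℝ)..x, GHf m y * GH p y := by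
  rw [GH, if_neg h]

lemma GHDef.intervalIntegrable {m x : ℝ} {p : List ℝ} (hdef : GHDef (m :: p) x)
    (h : ¬(m = 0 ∧ ∀ y ∈ p, y = 0)) :
    IntervalIntegrable (fun y => GHf m y * GH p y) volume 0 x := by
  rcases hdef with h' | ⟨-, hint⟩
  · exact absurd h' h
  · exact hint

lemma GH_replicate_zero (t : ℕ) (y : ℝ) :
    GH (List.replicate t 0) y = log y ^ t / t ! := by
  cases t with
  | zero => simp [GH]
  | succ n =>
    rw [List.replicate_succ, GH, if_pos ⟨rfl, fun y hy => List.eq_of_mem_replicate hy⟩]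
    simp

lemma hasDerivAt_log_pow_div_factorial (t : ℕ) {z : ℝ} (hz : z ≠ 0) :
    HasDerivAt (fun z => log z ^ (t + 1) / (t + 1)!) (1 / z * (log z ^ t / t !)) z := by
  refine (((hasDerivAt_log hz).fun_pow (t + 1)).div_const ((t + 1)! : ℝ)).congr_deriv ?_
  rw [Nat.factorial_succ]
  push_cast
  field_simp

lemma GH_replicate_of_neg {a : ℝ} (ha : a < 0) (t : ℕ) {y : ℝ} (hy : a < y) :
    GH (List.replicate t a) y = log (1 - y / a) ^ t / t ! := by
  induction t generalizing y with
  | zero => simp [GH]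
  | succ n ih =>
    have hlt : ∀ z ∈ Set.uIcc 0 y, a < z := fun z hz => by
      rcases Set.mem_uIcc.1 hz with h | h <;> linarith [h.1]
    have hpos : ∀ z ∈ Set.uIcc 0 y, 0 < 1 - z / a := fun z hz => by
      rw [sub_pos, div_lt_one_of_neg ha]
      exact hlt z hz
    have hcongr : ∀ z ∈ Set.uIcc 0 y, GHf a z * GH (List.replicate n a) z =
        1 / (1 - z / a) * (log (1 - z / a) ^ n / n !) * (-1 / a) := fun z hz => by
      have hinv : 1 / (z - a) = 1 / (1 - z / a) * (-1 / a) := by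
        have ha0 : a ≠ 0 := ha.ne
        have hza : z - a ≠ 0 := (sub_pos.2 (hlt z hz)).ne'
        have haz : a - z ≠ 0 := (sub_neg.2 (hlt z hz)).ne
        field_simp
        ring
      rw [GHf_of_neg ha, ih (hlt z hz), hinv]
      ring
    have hderiv : ∀ z ∈ Set.uIcc 0 y, HasDerivAt (fun z => log (1 - z / a) ^ (n + 1) / (n + 1)!)
        (1 / (1 - z / a) * (log (1 - z / a) ^ n / n !) * (-1 / a)) z := fun z hz => by
      have hinner : HasDerivAt (fun z => 1 - z / a) (-1 / a) z := by
        simpa [neg_div] using ((hasDerivAt_id z).div_const a).const_sub 1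
      exact (hasDerivAt_log_pow_div_factorial n (hpos z hz).ne').comp z hinner
    have hcont : ContinuousOn
        (fun z => 1 / (1 - z / a) * (log (1 - z / a) ^ n / n !) * (-1 / a)) (Set.uIcc 0 y) := by
      have hne : ∀ z ∈ Set.uIcc 0 y, 1 - z / a ≠ 0 := fun z hz => (hpos z hz).ne'
      exact ((continuousOn_const.div (by fun_prop) hne).mul
        (((continuousOn_log.comp (by fun_prop) hne).pow n).div_const _)).mul continuousOn_const
    rw [List.replicate_succ, GH_cons_of_not_forall_zero (fun h => ha.ne h.1),
      integral_congr hcongr, integral_eq_sub_of_hasDerivAt hderiv hcont.intervalIntegrable]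
    simp

/-- Argument shift `x + 1 → x` for the word `(1,0,…,0)` (a one followed by `t ≥ 1`
zeros, so total length `l = t + 1 ≥ 2`):
`H_{1,0,…,0}(x+1) = H_{1,0,…,0}(1) − H_{0,−1,…,−1}(x)`,
the second word being a zero followed by `l − 1` entries `−1`. -/
theorem gh_shift_plus_one_word_one_zeros (t : ℕ) (ht : 1 ≤ t) (x : ℝ) (hx : 0 < x)
    (hdef : GHDef ((1:ℝ) :: List.replicate t 0) (x + 1)) :
    GH ((1:ℝ) :: List.replicate t 0) (x + 1) =
      GH ((1:ℝ) :: List.replicate t 0) 1 - GH ((0:ℝ) :: List.replicate t (-1)) x := by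
  have h_one : ¬((1:ℝ) = 0 ∧ ∀ y ∈ List.replicate t (0:ℝ), y = 0) := fun h => one_ne_zero h.1
  have h_zero : ¬((0:ℝ) = 0 ∧ ∀ y ∈ List.replicate t (-1:ℝ), y = 0) := fun h => by
    have := h.2 (-1) (List.mem_replicate.2 ⟨by omega, rfl⟩)
    norm_num at this
  set F := fun y => GHf 1 y * GH (List.replicate t 0) y
  have hF : IntervalIntegrable F volume 0 (x + 1) := hdef.intervalIntegrable h_one
  have h1 : (1:ℝ) ∈ Set.uIcc 0 (x + 1) := Set.mem_uIcc.2 (.inl ⟨zero_le_one, by linarith⟩)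
  have hsplit := integral_add_adjacent_intervals
    (hF.mono_set (Set.uIcc_subset_uIcc Set.left_mem_uIcc h1))
    (hF.mono_set (Set.uIcc_subset_uIcc h1 Set.right_mem_uIcc))
  have hshift : ∫ y in (1:ℝ)..x + 1, F y = -GH ((0:ℝ) :: List.replicate t (-1)) x := by
    have hcomp := integral_comp_add_right F 1 (a := 0) (b := x)
    rw [zero_add] at hcomp
    rw [← hcomp, GH_cons_of_not_forall_zero h_zero, ← intervalIntegral.integral_neg]
    refine integral_congr fun y hy => ?_
    have hy0 : 0 ≤ y := (Set.uIcc_of_le hx.le ▸ hy).1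
    simp only [F, GHf_one_add_one, GH_replicate_zero,
      GH_replicate_of_neg neg_one_lt_zero t (by linarith : (-1:ℝ) < y)]
    ring_nf
  rw [GH_cons_of_not_forall_zero h_one, GH_cons_of_not_forall_zero h_one, ← hsplit, hshift]
  ring
end

section
/- Let l ≥ 1, m_1,…,m_l ∈ ℝ with m_l ≠ 0, and let x < 0 be such that the generalized harmonic polylogarithm H_{m_1,…,m_l}(−x) is defined. Then H_{m_1,…,m_l}(−x) = (−1)^{l−k} · H_{−m_1,…,−m_l}(x), where k denotes the number of indices m_i that equal zero and H_{−m_1,…,−m_l}(x) is defined by the same iterated-integral recursion with oriented integrals from 0 to the (negative) argument x. -/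
open scoped Classical
open MeasureTheory intervalIntegral Filter

/-- The number of indices equal to zero in a word. -/
noncomputable def zeroCount (ms : List ℝ) : ℕ :=
  (ms.map (fun m => if m = 0 then 1 else 0)).sum

/-! The substitution `y = -t` turns `∫_0^{-x} f_m(y) H_p(y) dy` into `∫_0^x (-f_m(-t)) H_p(-t) dt`,
and `-f_m(-t)` equals `-f_{-m}(t)` if `m ≠ 0` and `f_0(t)` if `m = 0`. Induction on the word
then collects one sign for each nonzero index. The condition `m_l ≠ 0` guarantees that no
suffix of the word is all-zero, so every level of the recursion is an honest integral. -/

lemma neg_GHf_neg (m t : ℝ) : -GHf m (-t) = (if m = 0 then 1 else -1) * GHf (-m) t := by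
  by_cases hm : m = 0
  · simp [GHf, hm, div_neg]
  · simp only [GHf, hm, neg_eq_zero, if_false, abs_neg, Real.sign_neg]
    ring_nf

lemma zeroCount_cons (m : ℝ) (p : List ℝ) :
    zeroCount (m :: p) = (if m = 0 then 1 else 0) + zeroCount p := by
  simp [zeroCount]

lemma zeroCount_le_length (p : List ℝ) : zeroCount p ≤ p.length := by
  induction p with
  | nil => simp [zeroCount]
  | cons m p ih =>
    rw [zeroCount_cons, List.length_cons]
    split <;> omega

lemma neg_one_pow_length_sub_zeroCount_cons (m : ℝ) (p : List ℝ) :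
    (-1 : ℝ) ^ ((m :: p).length - zeroCount (m :: p)) =
      (if m = 0 then 1 else -1) * (-1 : ℝ) ^ (p.length - zeroCount p) := by
  have hp := zeroCount_le_length p
  rw [zeroCount_cons, List.length_cons]
  split_ifs
  · rw [one_mul, show p.length + 1 - (1 + zeroCount p) = p.length - zeroCount p by omega]
  · rw [← pow_succ', show p.length + 1 - (0 + zeroCount p) = p.length - zeroCount p + 1 by omega]

lemma GH_cons_eq_integral {m : ℝ} {p : List ℝ} (h : ¬∀ a ∈ m :: p, a = 0) (x : ℝ) :
    GH (m :: p) x = ∫ y in (0 : ℝ)..x, GHf m y * GH p y := by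
  rw [GH, if_neg (List.forall_mem_cons.not.mp h)]

lemma GHDef.of_cons {m : ℝ} {p : List ℝ} {x : ℝ} (h : ¬∀ a ∈ m :: p, a = 0)
    (hdef : GHDef (m :: p) x) : ∀ y ∈ Set.uIoc (0 : ℝ) x, GHDef p y := by
  rw [GHDef] at hdef
  rcases hdef with hzero | ⟨hp, -⟩
  · exact absurd (List.forall_mem_cons.mpr hzero) h
  · exact hp

lemma integral_zero_neg {E : Type*} [NormedAddCommGroup E] [NormedSpace ℝ E] (F : ℝ → E)
    (x : ℝ) :
    ∫ y in (0 : ℝ)..(-x), F y = ∫ t in (0 : ℝ)..x, -F (-t) := by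
  rw [intervalIntegral.integral_neg, intervalIntegral.integral_comp_neg, neg_zero,
    intervalIntegral.integral_symm]

lemma GH_neg_eq_of_forall_getLast?_ne_zero (ms : List ℝ) (hlast : ∀ a ∈ ms.getLast?, a ≠ 0)
    (x : ℝ) (hx : x < 0) (hdef : GHDef ms (-x)) :
    GH ms (-x) =
      (-1 : ℝ) ^ (ms.length - zeroCount ms) * GH (ms.map (fun m => -m)) x := by
  induction ms generalizing x with
  | nil => simp [GH, zeroCount]
  | cons m p ih =>
    have hne : ¬∀ a ∈ m :: p, a = 0 := fun hall =>
      hlast _ (List.getLast?_eq_some_getLast (List.cons_ne_nil m p)) (hall _ (List.getLast_mem _))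
    have hne_neg : ¬∀ a ∈ -m :: p.map (fun m => -m), a = 0 := fun hall =>
      hne fun a ha => neg_eq_zero.mp (hall _ (List.mem_map_of_mem ha))
    have hdef_p := hdef.of_cons hne
    have hsuffix : ∀ t, x < t → t < 0 →
        GH p (-t) = (-1 : ℝ) ^ (p.length - zeroCount p) * GH (p.map (fun m => -m)) t := by
      intro t hxt ht
      refine ih (fun a ha => hlast a (List.mem_getLast?_cons ha)) t ht (hdef_p (-t) ?_)
      rw [Set.uIoc_of_le (by linarith)]
      constructor <;> linarith
    rw [GH_cons_eq_integral hne, List.map_cons, GH_cons_eq_integral hne_neg,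
      neg_one_pow_length_sub_zeroCount_cons, integral_zero_neg,
      ← intervalIntegral.integral_const_mul]
    refine integral_congr_ae ?_
    filter_upwards [volume.ae_ne 0] with t ht0 ht
    rw [Set.uIoc_of_ge hx.le] at ht
    rw [neg_mul_eq_neg_mul, neg_GHf_neg, hsuffix t ht.1 (lt_of_le_of_ne ht.2 ht0)]
    ring

/-- Argument reflection `−x → x` for `x < 0` and words with `m_l ≠ 0`:
`H_{m₁,…,m_l}(−x) = (−1)^{l−k} · H_{−m₁,…,−m_l}(x)`, where `k` is the number of
indices `m_i` equal to zero (the right-hand side being given by the same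
iterated-integral recursion with oriented integrals from `0` to the negative
argument `x`). -/
theorem gh_reflection (ms : List ℝ) (h : ms ≠ []) (hlast : ms.getLast h ≠ 0)
    (x : ℝ) (hx : x < 0) (hdef : GHDef ms (-x)) :
    GH ms (-x) =
      (-1 : ℝ) ^ (ms.length - zeroCount ms) * GH (ms.map (fun m => -m)) x := by
  refine GH_neg_eq_of_forall_getLast?_ne_zero ms ?_ x hx hdef
  intro a ha
  rw [List.getLast?_eq_some_getLast h, Option.mem_some_iff] at ha
  exact ha ▸ hlast
end

section
/- Let H_{m⃗}(x) = H_{m_1,…,m_k}(x) be a generalized harmonic polylogarithm with m_i ∈ ℝ∖(0,1] for all i, and let H_{b⃗}(x) = H_{b_1,…,b_l}(x) be one with b_i ∈ ℝ∖((−1,0)∪(0,1)) for all i and b_l ≠ 0. Then H_{m⃗}(1) and ∫_0^1 (H_{m⃗}(x) − H_{m⃗}(1))/(1−x) dx and H_{0,b_1,…,b_l}(1) are finite, and for every positive integer n: (i) ∫_0^1 (x^n − 1) H_{m⃗}(x)/(1−x) dx = ∫_0^1 x^n (H_{m⃗}(x) − H_{m⃗}(1))/(1−x) dx − ∫_0^1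 (H_{m⃗}(x) − H_{m⃗}(1))/(1−x) dx − S_1(n)·H_{m⃗}(1), where S_1(n) = Σ_{i=1}^n 1/i; and (ii) ∫_0^1 (x^n − 1) H_{b⃗}(1−x)/(1−x) dx = ∫_0^1 x^n H_{b⃗}(1−x)/(1−x) dx − H_{0,b_1,…,b_l}(1). -/
open scoped Classical
open MeasureTheory intervalIntegral Filter

open Set Real
open scoped Topology

/-!
Everything rests on one majorant principle: if `|g| ≤ φ'` on `(a, b)` with `φ` continuous on
`[a, b]`, then `g` is integrable on `[a, b]` and `|∫ₐᵇ g| ≤ φ b - φ a`.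

For letters outside `(0, 1]`, `f_m` is bounded on `[0, 1]` unless `m = 0`, so by induction on the
word, `H_{m⃗}(x) = O(1/√x)`, and even `O(√x)` unless `m⃗` consists of zeros (the all-zero word is
`logʷ x / w!`). Hence `f_{m₁} H_{m₂,…}` is `O(1/√t)`, and `φ = 2√t` on `[x, 1]` gives
`|H_{m⃗}(x) − H_{m⃗}(1)| ≤ M (1 − x)/√x`, so `(H_{m⃗}(x) − H_{m⃗}(1))/(1 − x)` is integrable.

For letters outside `(−1, 0) ∪ (0, 1)`, `|f_b(t)| ≤ 1/(t(1 − t))`, while `φ = √(t/(1 − t))` solves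
`φ' = φ/(2t(1 − t))`; so by induction `|H_{b⃗}(x)| ≤ C √(x/(1 − x))` when the last letter is
nonzero, and `H_{b⃗}(t)/t` is dominated by `C/√(t(1 − t))`, the derivative of `C arcsin(2t − 1)`.

The identities follow from `(xⁿ − 1)/(1 − x) = −(1 + x + ⋯ + xⁿ⁻¹)`, `∫₀¹ xⁱ = 1/(i + 1)`, and,
for (ii), the substitution `u = 1 − x`.
-/

section Majorant

variable {g φ φ' : ℝ → ℝ} {a b : ℝ}

theorem intervalIntegrable_deriv_of_nonneg_of_le (hab : a ≤ b) (hφ : ContinuousOn φ (Icc a b))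
    (hφ' : ∀ t ∈ Ioo a b, HasDerivAt φ (φ' t) t) (hpos : ∀ t ∈ Ioo a b, 0 ≤ φ' t) :
    IntervalIntegrable φ' volume a b :=
  (intervalIntegrable_iff_integrableOn_Ioc_of_le hab).2 <|
    integrableOn_deriv_of_nonneg hφ hφ' hpos

theorem intervalIntegrable_of_abs_le_deriv (hab : a ≤ b) (hφ : ContinuousOn φ (Icc a b))
    (hφ' : ∀ t ∈ Ioo a b, HasDerivAt φ (φ' t) t) (hg : ContinuousOn g (Ioo a b))
    (hle : ∀ t ∈ Ioo a b, |g t| ≤ φ' t) : IntervalIntegrable g volume a b := by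
  have hIoo : volume.restrict (Ioo a b) = volume.restrict (Ioc a b) :=
    Measure.restrict_congr_set Ioo_ae_eq_Ioc
  refine (intervalIntegrable_deriv_of_nonneg_of_le hab hφ hφ'
    fun t ht => (abs_nonneg _).trans (hle t ht)).mono_fun' ?_ ?_
  · rw [uIoc_of_le hab, ← hIoo]
    exact hg.aestronglyMeasurable measurableSet_Ioo
  · rw [uIoc_of_le hab, ← hIoo]
    exact (ae_restrict_iff' measurableSet_Ioo).2 (ae_of_all _ hle)

theorem abs_integral_le_sub_of_abs_le_deriv (hab : a ≤ b) (hφ : ContinuousOn φ (Icc a b))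
    (hφ' : ∀ t ∈ Ioo a b, HasDerivAt φ (φ' t) t) (hg : ContinuousOn g (Ioo a b))
    (hle : ∀ t ∈ Ioo a b, |g t| ≤ φ' t) : |∫ t in a..b, g t| ≤ φ b - φ a := by
  have hφ'_int := intervalIntegrable_deriv_of_nonneg_of_le hab hφ hφ'
    fun t ht => (abs_nonneg _).trans (hle t ht)
  calc |∫ t in a..b, g t| ≤ ∫ t in a..b, |g t| := intervalIntegral.abs_integral_le_integral_abs hab
    _ ≤ ∫ t in a..b, φ' t := intervalIntegral.integral_mono_on_of_le_Ioo hab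
        (intervalIntegrable_of_abs_le_deriv hab hφ hφ' hg hle).abs hφ'_int hle
    _ = φ b - φ a := intervalIntegral.integral_eq_sub_of_hasDerivAt_of_le hab hφ hφ' hφ'_int

end Majorant

theorem hasDerivAt_two_mul_sqrt {t : ℝ} (ht : 0 < t) (D : ℝ) :
    HasDerivAt (fun t => 2 * D * √t) (D / √t) t :=
  ((Real.hasDerivAt_sqrt ht.ne').const_mul (2 * D)).congr_deriv <| by field_simp

section SqrtMajorant

variable {g : ℝ → ℝ} {D a b : ℝ}

theorem intervalIntegrable_of_abs_le_div_sqrt (ha : 0 ≤ a) (hab : a ≤ b)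
    (hg : ContinuousOn g (Ioo a b)) (hle : ∀ t ∈ Ioo a b, |g t| ≤ D / √t) :
    IntervalIntegrable g volume a b :=
  intervalIntegrable_of_abs_le_deriv hab (by fun_prop)
    (fun t ht => hasDerivAt_two_mul_sqrt (ha.trans_lt ht.1) D) hg hle

theorem abs_integral_le_of_abs_le_div_sqrt (ha : 0 ≤ a) (hab : a ≤ b)
    (hg : ContinuousOn g (Ioo a b)) (hle : ∀ t ∈ Ioo a b, |g t| ≤ D / √t) :
    |∫ t in a..b, g t| ≤ 2 * D * (√b - √a) := by
  have := abs_integral_le_sub_of_abs_le_deriv hab (by fun_prop)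
    (fun t ht => hasDerivAt_two_mul_sqrt (ha.trans_lt ht.1) D) hg hle
  linarith

end SqrtMajorant

section Primitive

variable {g : ℝ → ℝ} {a b : ℝ}

theorem continuousOn_primitive_Icc (hab : a ≤ b) (hg : IntervalIntegrable g volume a b) :
    ContinuousOn (fun x => ∫ t in a..x, g t) (Icc a b) := by
  simpa [uIcc_of_le hab] using
    intervalIntegral.continuousOn_primitive_interval ((intervalIntegrable_iff' (f := g)).1 hg)

theorem continuousOn_primitive_Ioo (hg : ContinuousOn g (Ioo a b))
    (hint : ∀ x ∈ Ioo a b, IntervalIntegrable g volume a x) :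
    ContinuousOn (fun x => ∫ t in a..x, g t) (Ioo a b) := fun x hx =>
  (intervalIntegral.integral_hasDerivAt_right (hint x hx)
    (hg.stronglyMeasurableAtFilter isOpen_Ioo x hx)
    (hg.continuousAt (isOpen_Ioo.mem_nhds hx))).continuousAt.continuousWithinAt

end Primitive

theorem GHf_eq (a x : ℝ) : GHf a x = (if 0 < a then -1 else 1) * (x - a)⁻¹ := by
  rcases lt_trichotomy a 0 with ha | rfl | ha
  · simp [GHf, ha.ne, ha.not_gt, abs_of_neg ha, Real.sign_of_neg ha, sub_eq_neg_add, add_comm]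
  · simp [GHf]
  · simp [GHf, ha, ha.ne', abs_of_pos ha, Real.sign_of_pos ha, ← inv_neg]

theorem GHf_zero_s11 (x : ℝ) : GHf 0 x = x⁻¹ := by simp [GHf_eq]

theorem abs_GHf (a x : ℝ) : |GHf a x| = |x - a|⁻¹ := by
  rw [GHf_eq]; split_ifs <;> simp

section Letters

variable {a t : ℝ}

theorem continuousOn_GHf {s : Set ℝ} (ha : a ∉ s) : ContinuousOn (GHf a) s := by
  simp_rw [funext (GHf_eq a)]
  exact continuousOn_const.mul <| (continuousOn_id.sub continuousOn_const).inv₀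
    fun x hx => sub_ne_zero.2 (ne_of_mem_of_not_mem hx ha)

theorem exists_abs_GHf_le_of_notMem_Icc (ha : a ∉ Icc 0 1) :
    ∃ A, ∀ t ∈ Icc (0 : ℝ) 1, |GHf a t| ≤ A :=
  isCompact_Icc.exists_bound_of_continuousOn (continuousOn_GHf ha)

theorem abs_GHf_le_inv_one_sub (ha : a ∉ Ioo (-1) 0 ∧ a ∉ Ioo 0 1) (ha0 : a ≠ 0)
    (ht : t ∈ Ioo (0 : ℝ) 1) : |GHf a t| ≤ (1 - t)⁻¹ := by
  obtain ⟨ht0, ht1⟩ := ht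
  have hdist : 1 - t ≤ |t - a| := by
    rcases lt_or_gt_of_ne ha0 with ha' | ha'
    · have ha1 : a ≤ -1 := by by_contra h; exact ha.1 ⟨not_le.1 h, ha'⟩
      rw [abs_of_pos (by linarith)]; linarith
    · have ha1 : 1 ≤ a := by by_contra h; exact ha.2 ⟨ha', not_le.1 h⟩
      rw [abs_of_neg (by linarith)]; linarith
  rw [abs_GHf]
  exact inv_anti₀ (by linarith) hdist

theorem abs_GHf_le_inv_mul_one_sub (ha : a ∉ Ioo (-1) 0 ∧ a ∉ Ioo 0 1)
    (ht : t ∈ Ioo (0 : ℝ) 1) : |GHf a t| ≤ (t * (1 - t))⁻¹ := by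
  obtain ⟨ht0, ht1⟩ := ht
  rcases eq_or_ne a 0 with rfl | ha0
  · rw [GHf_zero_s11, abs_of_pos (inv_pos.2 ht0)]
    exact inv_anti₀ (by positivity) (by nlinarith)
  · exact (abs_GHf_le_inv_one_sub ha ha0 ⟨ht0, ht1⟩).trans
      (inv_anti₀ (by nlinarith) (by nlinarith))

end Letters

theorem GH_of_forall_eq_zero {q : List ℝ} (hq : ∀ y ∈ q, y = 0) (x : ℝ) :
    GH q x = log x ^ q.length / (q.length.factorial : ℝ) := by
  cases q with
  | nil => simp [GH]
  | cons m p => rw [GH, if_pos (List.forall_mem_cons.1 hq)]; rfl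

theorem GH_cons_of_not_forall {m : ℝ} {p : List ℝ} (h : ¬ ∀ y ∈ m :: p, y = 0) (x : ℝ) :
    GH (m :: p) x = ∫ t in (0 : ℝ)..x, GHf m t * GH p t := by
  rw [GH, if_neg (by rwa [List.forall_mem_cons] at h)]

noncomputable def sqrtOdds (t : ℝ) : ℝ := √t / √(1 - t)

theorem sqrtOdds_zero : sqrtOdds 0 = 0 := by simp [sqrtOdds]

theorem continuousOn_sqrtOdds : ContinuousOn sqrtOdds (Iio 1) :=
  (continuous_sqrt.continuousOn).div (by fun_prop) fun t ht =>
    (Real.sqrt_pos.2 (sub_pos.2 ht)).ne'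

theorem hasDerivAt_sqrtOdds {t : ℝ} (ht : t ∈ Ioo (0 : ℝ) 1) :
    HasDerivAt sqrtOdds (sqrtOdds t / (2 * (t * (1 - t)))) t := by
  obtain ⟨ht0, ht1⟩ := ht
  have h1 : 0 < 1 - t := sub_pos.2 ht1
  have hs := Real.sqrt_pos.2 ht0
  have hs1 := Real.sqrt_pos.2 h1
  have hd := (Real.hasDerivAt_sqrt ht0.ne').div
    (((hasDerivAt_id t).const_sub 1).sqrt h1.ne') hs1.ne'
  refine hd.congr_deriv ?_
  simp only [sqrtOdds, id]
  field_simp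
  rw [Real.sq_sqrt ht0.le, Real.sq_sqrt h1.le]
  ring

theorem self_le_sqrtOdds {t : ℝ} (ht : t ∈ Ioo (0 : ℝ) 1) : t ≤ sqrtOdds t := by
  obtain ⟨ht0, ht1⟩ := ht
  have hs1 : 0 < √(1 - t) := Real.sqrt_pos.2 (sub_pos.2 ht1)
  calc t ≤ √t := Real.le_sqrt_of_sq_le (by nlinarith)
    _ ≤ √t / √(1 - t) := le_div_self (Real.sqrt_nonneg _) hs1
        (Real.sqrt_le_one.2 (by linarith))

theorem hasDerivAt_arcsin_two_mul_sub_one {t : ℝ} (ht : t ∈ Ioo (0 : ℝ) 1) :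
    HasDerivAt (fun t => arcsin (2 * t - 1)) (sqrtOdds t / t) t := by
  obtain ⟨ht0, ht1⟩ := ht
  have hd := (Real.hasDerivAt_arcsin (x := 2 * t - 1) (by linarith) (by linarith)).comp t
    (((hasDerivAt_id t).const_mul 2).sub_const 1)
  refine hd.congr_deriv ?_
  have h4 : 1 - (2 * t - 1) ^ 2 = 2 ^ 2 * (t * (1 - t)) := by ring
  rw [h4, Real.sqrt_mul (by positivity), Real.sqrt_sq zero_le_two,
    Real.sqrt_mul ht0.le, sqrtOdds]
  have hs := Real.sqrt_pos.2 ht0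
  have hs1 := Real.sqrt_pos.2 (sub_pos.2 ht1)
  field_simp
  rw [Real.sq_sqrt ht0.le]

theorem abs_log_pow_le {x : ℝ} (hx : x ∈ Ioc (0 : ℝ) 1) {w : ℕ} (hw : w ≠ 0) :
    |log x| ^ w ≤ (2 * w) ^ w * (1 - x) / √x := by
  obtain ⟨hx0, hx1⟩ := hx
  have hw' : (1 : ℝ) ≤ w := Nat.one_le_cast.2 (Nat.one_le_iff_ne_zero.2 hw)
  set y := x ^ (1 / (2 * w : ℝ)) with hy
  have hy0 : 0 < y := Real.rpow_pos_of_pos hx0 _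
  have hxy : x ≤ y := Real.self_le_rpow_of_le_one hx0.le hx1 <| by
    rw [div_le_one (by positivity)]; linarith
  have hyw : y ^ w = √x := by
    rw [hy, ← Real.rpow_natCast, ← Real.rpow_mul hx0.le, Real.sqrt_eq_rpow]
    congr 1; field_simp
  have hlog : |log x| ≤ 2 * w * (1 - x) / y := by
    have h := Real.one_sub_inv_le_log_of_pos hy0
    rw [hy, Real.log_rpow hx0, ← hy] at h
    rw [abs_of_nonpos (Real.log_nonpos hx0.le hx1), le_div_iff₀ hy0]
    have h' : -log x ≤ 2 * w * (y⁻¹ - 1) := by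
      have := mul_le_mul_of_nonneg_left h (by positivity : (0 : ℝ) ≤ 2 * w)
      field_simp at this ⊢
      linarith
    calc -log x * y ≤ 2 * w * (y⁻¹ - 1) * y := mul_le_mul_of_nonneg_right h' hy0.le
      _ = 2 * w * (1 - y) := by field_simp
      _ ≤ 2 * w * (1 - x) := by gcongr
  calc |log x| ^ w ≤ (2 * w * (1 - x) / y) ^ w := pow_le_pow_left₀ (abs_nonneg _) hlog w
    _ = (2 * w) ^ w * (1 - x) ^ w / √x := by rw [div_pow, mul_pow, hyw]
    _ ≤ (2 * w) ^ w * (1 - x) / √x := by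
        gcongr
        exact pow_le_of_le_one (by linarith) (by linarith) hw

theorem abs_le_div_sqrt_of_abs_le_mul_sqrt {y C x : ℝ} (hx : x ∈ Ioc (0 : ℝ) 1)
    (h : |y| ≤ C * √x) : |y| ≤ C / √x := by
  have hs : 0 < √x := Real.sqrt_pos.2 hx.1
  have hC : 0 ≤ C := nonneg_of_mul_nonneg_left ((abs_nonneg _).trans h) hs
  calc |y| ≤ C * √x := h
    _ ≤ C / √x := by
        rw [le_div_iff₀ hs, mul_assoc, Real.mul_self_sqrt hx.1.le]
        exact mul_le_of_le_one_right hC hx.2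

theorem ContinuousOn.tendsto_nhdsLT {f : ℝ → ℝ} {a b : ℝ} (hf : ContinuousOn f (Ioc a b))
    (hab : a < b) : Tendsto f (𝓝[<] b) (𝓝 (f b)) :=
  (hf b ⟨hab, le_rfl⟩).mono_of_mem_nhdsWithin (Ioc_mem_nhdsLT hab)

section LettersOutsideIoc

variable {q p : List ℝ} {m : ℝ}

theorem exists_abs_GHf_mul_GH_le_div_sqrt (hm : m ∉ Ioc 0 1) (hmp : ¬ ∀ y ∈ m :: p, y = 0)
    (hp_inv : ∃ C, ∀ t ∈ Ioc (0 : ℝ) 1, |GH p t| ≤ C / √t)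
    (hp_sqrt : (¬ ∀ y ∈ p, y = 0) → ∃ C, ∀ t ∈ Ioc (0 : ℝ) 1, |GH p t| ≤ C * √t) :
    ∃ D, ∀ t ∈ Ioc (0 : ℝ) 1, |GHf m t * GH p t| ≤ D / √t := by
  rcases eq_or_ne m 0 with rfl | hm0
  · obtain ⟨C, hC⟩ := hp_sqrt fun h => hmp (List.forall_mem_cons.2 ⟨rfl, h⟩)
    refine ⟨C, fun t ht => ?_⟩
    rw [GHf_zero_s11, abs_mul, abs_of_pos (inv_pos.2 ht.1)]
    calc t⁻¹ * |GH p t| ≤ t⁻¹ * (C * √t) :=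
          mul_le_mul_of_nonneg_left (hC t ht) (inv_nonneg.2 ht.1.le)
      _ = C / √t := by
          rw [mul_comm, mul_assoc, ← div_eq_mul_inv, Real.sqrt_div_self', mul_one_div]
  · obtain ⟨A, hA⟩ :=
      exists_abs_GHf_le_of_notMem_Icc fun h => hm ⟨lt_of_le_of_ne h.1 hm0.symm, h.2⟩
    obtain ⟨C, hC⟩ := hp_inv
    refine ⟨A * C, fun t ht => ?_⟩
    rw [abs_mul, mul_div_assoc]
    exact mul_le_mul (hA t (Ioc_subset_Icc_self ht)) (hC t ht) (abs_nonneg _)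
      ((abs_nonneg _).trans (hA t (Ioc_subset_Icc_self ht)))

theorem GH_bounds_of_forall_notMem_Ioc (hq : ∀ m ∈ q, m ∉ Ioc 0 1) :
    ContinuousOn (GH q) (Ioc 0 1) ∧
      (∃ C, ∀ x ∈ Ioc (0 : ℝ) 1, |GH q x| ≤ C / √x) ∧
      ((¬ ∀ y ∈ q, y = 0) → ∃ C, ∀ x ∈ Ioc (0 : ℝ) 1, |GH q x| ≤ C * √x) := by
  induction q with
  | nil =>
    refine ⟨continuousOn_const, ⟨1, fun x hx => ?_⟩, fun h => absurd (by simp) h⟩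
    rw [GH, abs_one, one_le_div (Real.sqrt_pos.2 hx.1)]
    exact Real.sqrt_le_one.2 hx.2
  | cons m p ih =>
    obtain ⟨hpc, hp_inv, hp_sqrt⟩ := ih fun y hy => hq y (List.mem_cons_of_mem m hy)
    have hm := hq m List.mem_cons_self
    by_cases hz : ∀ y ∈ m :: p, y = 0
    · have hw : (m :: p).length ≠ 0 := by simp
      refine ⟨?_, ⟨(2 * (m :: p).length) ^ (m :: p).length, fun x hx => ?_⟩,
        fun h => absurd hz h⟩
      · simp_rw [funext (GH_of_forall_eq_zero hz)]
        exact ((continuousOn_log.mono fun x hx => hx.1.ne').pow _).div_const _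
      · rw [GH_of_forall_eq_zero hz, abs_div, abs_pow, Nat.abs_cast]
        calc |log x| ^ (m :: p).length / ((m :: p).length.factorial : ℝ)
            ≤ |log x| ^ (m :: p).length :=
              div_le_self (by positivity) (Nat.one_le_cast.2 (Nat.factorial_pos _))
          _ ≤ _ := abs_log_pow_le hx hw
          _ ≤ _ := div_le_div_of_nonneg_right
              (mul_le_of_le_one_right (by positivity) (by linarith [hx.1])) (Real.sqrt_nonneg _)
    · obtain ⟨D, hD⟩ := exists_abs_GHf_mul_GH_le_div_sqrt hm hz hp_inv hp_sqrt
      have hgc : ContinuousOn (fun t => GHf m t * GH p t) (Ioo 0 1) :=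
        (continuousOn_GHf fun h => hm (Ioo_subset_Ioc_self h)).mul
          (hpc.mono Ioo_subset_Ioc_self)
      have hsqrt : ∀ x ∈ Ioc (0 : ℝ) 1, |GH (m :: p) x| ≤ 2 * D * √x := fun x hx => by
        simpa [GH_cons_of_not_forall hz] using abs_integral_le_of_abs_le_div_sqrt le_rfl hx.1.le
          (hgc.mono (Ioo_subset_Ioo_right hx.2)) fun t ht => hD t ⟨ht.1, ht.2.le.trans hx.2⟩
      have hint := intervalIntegrable_of_abs_le_div_sqrt le_rfl zero_le_one hgc
        fun t ht => hD t (Ioo_subset_Ioc_self ht)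
      refine ⟨?_, ⟨2 * D, fun x hx => abs_le_div_sqrt_of_abs_le_mul_sqrt hx (hsqrt x hx)⟩,
        fun _ => ⟨2 * D, hsqrt⟩⟩
      simp_rw [funext (GH_cons_of_not_forall hz)]
      exact (continuousOn_primitive_Icc zero_le_one hint).mono Ioc_subset_Icc_self

theorem exists_abs_GH_sub_GH_one_le (hq : ∀ m ∈ q, m ∉ Ioc 0 1) :
    ∃ M, ∀ x ∈ Ioc (0 : ℝ) 1, |GH q x - GH q 1| ≤ M * (1 - x) / √x := by
  by_cases hz : ∀ y ∈ q, y = 0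
  · refine ⟨(2 * q.length) ^ q.length, fun x hx => ?_⟩
    have h1x : 0 ≤ 1 - x := sub_nonneg.2 hx.2
    simp only [GH_of_forall_eq_zero hz, log_one]
    rcases eq_or_ne q.length 0 with hw | hw
    · simp only [hw, pow_zero, sub_self, abs_zero]
      positivity
    rw [zero_pow hw, zero_div, sub_zero, abs_div, abs_pow, Nat.abs_cast]
    calc |log x| ^ q.length / (q.length.factorial : ℝ) ≤ |log x| ^ q.length :=
          div_le_self (by positivity) (Nat.one_le_cast.2 (Nat.factorial_pos _))
      _ ≤ _ := abs_log_pow_le hx hw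
  obtain _ | ⟨m, p⟩ := q
  · exact absurd (by simp) hz
  have hm := hq m List.mem_cons_self
  obtain ⟨hpc, hp_inv, hp_sqrt⟩ :=
    GH_bounds_of_forall_notMem_Ioc fun y hy => hq y (List.mem_cons_of_mem m hy)
  obtain ⟨D, hD⟩ := exists_abs_GHf_mul_GH_le_div_sqrt hm hz hp_inv hp_sqrt
  have hD0 : 0 ≤ D := by simpa using (abs_nonneg _).trans (hD 1 ⟨one_pos, le_rfl⟩)
  have hgc : ContinuousOn (fun t => GHf m t * GH p t) (Ioo 0 1) :=
    (continuousOn_GHf fun h => hm (Ioo_subset_Ioc_self h)).mul (hpc.mono Ioo_subset_Ioc_self)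
  have hint := intervalIntegrable_of_abs_le_div_sqrt le_rfl zero_le_one hgc
    fun t ht => hD t (Ioo_subset_Ioc_self ht)
  refine ⟨2 * D, fun x hx => ?_⟩
  have hsub : GH (m :: p) 1 - GH (m :: p) x = ∫ t in x..1, GHf m t * GH p t := by
    simp only [GH_cons_of_not_forall hz]
    exact intervalIntegral.integral_interval_sub_left hint
      (hint.mono_set (uIcc_subset_uIcc_left (by simp [uIcc_of_le, hx.1.le, hx.2])))
  have hs1 : √x ≤ 1 := Real.sqrt_le_one.2 hx.2
  rw [abs_sub_comm, hsub]
  calc |∫ t in x..1, GHf m t * GH p t| ≤ 2 * D * (√1 - √x) :=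
        abs_integral_le_of_abs_le_div_sqrt hx.1.le hx.2 (hgc.mono (Ioo_subset_Ioo_left hx.1.le))
          fun t ht => hD t ⟨hx.1.trans ht.1, ht.2.le⟩
    _ ≤ 2 * D * (1 - x) := by
        rw [Real.sqrt_one]
        gcongr
        exact Real.le_sqrt_of_sq_le (by nlinarith [hx.1, hx.2])
    _ ≤ 2 * D * (1 - x) / √x :=
        le_div_self (by nlinarith [hx.2]) (Real.sqrt_pos.2 hx.1) hs1

theorem intervalIntegrable_GH_sub_GH_one_div_one_sub (hq : ∀ m ∈ q, m ∉ Ioc 0 1) :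
    IntervalIntegrable (fun x => (GH q x - GH q 1) / (1 - x)) volume 0 1 := by
  obtain ⟨M, hM⟩ := exists_abs_GH_sub_GH_one_le hq
  refine intervalIntegrable_of_abs_le_div_sqrt (D := M) le_rfl zero_le_one ?_ fun x hx => ?_
  · exact (((GH_bounds_of_forall_notMem_Ioc hq).1.mono Ioo_subset_Ioc_self).sub
      continuousOn_const).div (continuousOn_const.sub continuousOn_id)
        fun x hx => (sub_pos.2 hx.2).ne'
  · have h1x : 0 < 1 - x := sub_pos.2 hx.2
    rw [abs_div, abs_of_pos h1x, div_le_iff₀ h1x]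
    calc |GH q x - GH q 1| ≤ M * (1 - x) / √x := hM x (Ioo_subset_Ioc_self hx)
      _ = M / √x * (1 - x) := by ring

end LettersOutsideIoc

section LettersOutsideIoo

theorem GH_bounds_of_getLast_ne_zero {q : List ℝ}
    (hq : ∀ c ∈ q, c ∉ Ioo (-1) 0 ∧ c ∉ Ioo 0 1) (hne : q ≠ []) (hlast : q.getLast hne ≠ 0) :
    ContinuousOn (GH q) (Ioo 0 1) ∧ ∃ C, ∀ x ∈ Ioo (0 : ℝ) 1, |GH q x| ≤ C * sqrtOdds x := by
  induction q with
  | nil => exact absurd rfl hne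
  | cons b p ih =>
    have hb := hq b List.mem_cons_self
    have hp : ∀ c ∈ p, c ∉ Ioo (-1) 0 ∧ c ∉ Ioo 0 1 := fun c hc => hq c (List.mem_cons_of_mem b hc)
    have hz : ¬ ∀ y ∈ b :: p, y = 0 := fun h => hlast (h _ (List.getLast_mem hne))
    obtain ⟨hpc, C, hC⟩ : ContinuousOn (GH p) (Ioo 0 1) ∧ ∃ C, ∀ t ∈ Ioo (0 : ℝ) 1,
        |GHf b t * GH p t| ≤ C * (sqrtOdds t / (2 * (t * (1 - t)))) := by
      rcases eq_or_ne p [] with rfl | hpne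
      · refine ⟨continuousOn_const, 2, fun t ht => ?_⟩
        have h1t : 0 < t * (1 - t) := mul_pos ht.1 (sub_pos.2 ht.2)
        rw [GH, mul_one]
        calc |GHf b t| ≤ (1 - t)⁻¹ := abs_GHf_le_inv_one_sub hb (by simpa using hlast) ht
          _ = t / (t * (1 - t)) := by field_simp [ht.1.ne']
          _ ≤ sqrtOdds t / (t * (1 - t)) := by gcongr; exact self_le_sqrtOdds ht
          _ = 2 * (sqrtOdds t / (2 * (t * (1 - t)))) := by field_simp
      · obtain ⟨hpc, C, hC⟩ := ih hp hpne (by rwa [List.getLast_cons hpne] at hlast)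
        refine ⟨hpc, 2 * C, fun t ht => ?_⟩
        have h1t : 0 < t * (1 - t) := mul_pos ht.1 (sub_pos.2 ht.2)
        rw [abs_mul]
        calc |GHf b t| * |GH p t| ≤ (t * (1 - t))⁻¹ * (C * sqrtOdds t) :=
              mul_le_mul (abs_GHf_le_inv_mul_one_sub hb ht) (hC t ht) (abs_nonneg _)
                (inv_nonneg.2 h1t.le)
          _ = 2 * C * (sqrtOdds t / (2 * (t * (1 - t)))) := by field_simp
    have hgc : ContinuousOn (fun t => GHf b t * GH p t) (Ioo 0 1) :=
      (continuousOn_GHf hb.2).mul hpc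
    have hmajorant : ∀ x ∈ Ioo (0 : ℝ) 1,
        IntervalIntegrable (fun t => GHf b t * GH p t) volume 0 x ∧
          |∫ t in (0 : ℝ)..x, GHf b t * GH p t| ≤ C * sqrtOdds x - C * sqrtOdds 0 := by
      intro x hx
      have hφ : ContinuousOn (fun t => C * sqrtOdds t) (Icc 0 x) :=
        continuousOn_const.mul (continuousOn_sqrtOdds.mono fun t ht => ht.2.trans_lt hx.2)
      have hφ' : ∀ t ∈ Ioo 0 x, HasDerivAt (fun t => C * sqrtOdds t)
          (C * (sqrtOdds t / (2 * (t * (1 - t))))) t := fun t ht =>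
        (hasDerivAt_sqrtOdds ⟨ht.1, ht.2.trans hx.2⟩).const_mul C
      have hgx := hgc.mono (Ioo_subset_Ioo_right hx.2.le)
      have hle : ∀ t ∈ Ioo 0 x, _ := fun t ht => hC t ⟨ht.1, ht.2.trans hx.2⟩
      exact ⟨intervalIntegrable_of_abs_le_deriv hx.1.le hφ hφ' hgx hle,
        abs_integral_le_sub_of_abs_le_deriv hx.1.le hφ hφ' hgx hle⟩
    refine ⟨?_, C, fun x hx => ?_⟩
    · simp_rw [funext (GH_cons_of_not_forall hz)]
      exact continuousOn_primitive_Ioo hgc fun x hx => (hmajorant x hx).1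
    · simpa [GH_cons_of_not_forall hz, sqrtOdds_zero] using (hmajorant x hx).2

theorem intervalIntegrable_GHf_zero_mul_GH {q : List ℝ}
    (hq : ∀ c ∈ q, c ∉ Ioo (-1) 0 ∧ c ∉ Ioo 0 1) (hne : q ≠ []) (hlast : q.getLast hne ≠ 0) :
    IntervalIntegrable (fun t => GHf 0 t * GH q t) volume 0 1 := by
  obtain ⟨hqc, C, hC⟩ := GH_bounds_of_getLast_ne_zero hq hne hlast
  refine intervalIntegrable_of_abs_le_deriv zero_le_one (φ := fun t => C * arcsin (2 * t - 1))
    (by fun_prop) (fun t ht => (hasDerivAt_arcsin_two_mul_sub_one ht).const_mul C)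
    ((continuousOn_GHf (by simp)).mul hqc) fun t ht => ?_
  rw [GHf_zero_s11, abs_mul, abs_of_pos (inv_pos.2 ht.1)]
  calc t⁻¹ * |GH q t| ≤ t⁻¹ * (C * sqrtOdds t) :=
        mul_le_mul_of_nonneg_left (hC t ht) (inv_nonneg.2 ht.1.le)
    _ = C * (sqrtOdds t / t) := by ring

end LettersOutsideIoo

section MellinIdentities

theorem integral_geom_sum_eq_sum_inv (n : ℕ) :
    ∫ x in (0 : ℝ)..1, ∑ i ∈ Finset.range n, x ^ i = ∑ i ∈ Finset.Icc 1 n, (1 : ℝ) / i := by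
  rw [intervalIntegral.integral_finsetSum fun i _ => (continuous_pow i).intervalIntegrable 0 1,
    ← Finset.Ico_add_one_right_eq_Icc, Finset.sum_Ico_eq_sum_range]
  refine Finset.sum_congr (by simp) fun i _ => ?_
  rw [integral_pow]
  push_cast
  ring

theorem integral_pow_sub_one_mul_div_one_sub {f : ℝ → ℝ} {c : ℝ}
    (hf : IntervalIntegrable (fun x => (f x - c) / (1 - x)) volume 0 1) (n : ℕ) :
    (∫ x in (0 : ℝ)..1, (x ^ n - 1) * f x / (1 - x)) =
      (∫ x in (0 : ℝ)..1, x ^ n * (f x - c) / (1 - x)) -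
        (∫ x in (0 : ℝ)..1, (f x - c) / (1 - x)) - (∑ i ∈ Finset.Icc 1 n, (1 : ℝ) / i) * c := by
  have hf_pow : IntervalIntegrable (fun x => x ^ n * (f x - c) / (1 - x)) volume 0 1 := by
    simpa only [mul_div_assoc] using hf.continuousOn_mul (continuous_pow n).continuousOn
  have hgeom : IntervalIntegrable (fun x => (∑ i ∈ Finset.range n, x ^ i) * c) volume 0 1 :=
    Continuous.intervalIntegrable (by fun_prop) 0 1
  have hae : ∀ᵐ x ∂volume, x ∈ uIoc (0 : ℝ) 1 →
      (x ^ n - 1) * f x / (1 - x) = x ^ n * (f x - c) / (1 - x) - (f x - c) / (1 - x) -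
        (∑ i ∈ Finset.range n, x ^ i) * c := by
    have hne1 : ∀ᵐ x ∂volume, x ≠ (1 : ℝ) := by simp [ae_iff, measure_singleton]
    filter_upwards [hne1] with x hx _
    have h1x : 1 - x ≠ 0 := sub_ne_zero.2 hx.symm
    field_simp
    linear_combination (-c * (1 - x) - x * c) * geom_sum_mul x n
  rw [intervalIntegral.integral_congr_ae hae, intervalIntegral.integral_sub (hf_pow.sub hf) hgeom,
    intervalIntegral.integral_sub hf_pow hf, intervalIntegral.integral_mul_const,
    integral_geom_sum_eq_sum_inv]

theorem integral_pow_sub_one_mul_comp_div {G : ℝ → ℝ}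
    (hG : IntervalIntegrable (fun u => G u / u) volume 0 1) (n : ℕ) :
    (∫ x in (0 : ℝ)..1, (x ^ n - 1) * G (1 - x) / (1 - x)) =
      (∫ x in (0 : ℝ)..1, x ^ n * G (1 - x) / (1 - x)) - ∫ u in (0 : ℝ)..1, G u / u := by
  have hG' : IntervalIntegrable (fun x => G (1 - x) / (1 - x)) volume 0 1 := by
    simpa using (hG.comp_sub_left 1).symm
  have hG_pow : IntervalIntegrable (fun x => x ^ n * (G (1 - x) / (1 - x))) volume 0 1 :=
    hG'.continuousOn_mul (continuous_pow n).continuousOn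
  simp_rw [mul_div_assoc, sub_mul, one_mul]
  rw [intervalIntegral.integral_sub hG_pow hG',
    intervalIntegral.integral_comp_sub_left (fun u => G u / u) 1]
  norm_num

end MellinIdentities

theorem gh_mellin_pole_one_regularization_general (ms : List ℝ)
    (hm : ∀ m ∈ ms, ¬ (0 < m ∧ m ≤ 1))
    (bs : List ℝ) (hbs : bs ≠ [])
    (hb : ∀ c ∈ bs, c ∉ Set.Ioo (-1:ℝ) 0 ∧ c ∉ Set.Ioo (0:ℝ) 1)
    (hblast : bs.getLast hbs ≠ 0) :
    Filter.Tendsto (fun x => GH ms x) (nhdsWithin 1 (Set.Iio 1)) (nhds (GH ms 1)) ∧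
    IntervalIntegrable (fun x => (GH ms x - GH ms 1) / (1 - x)) MeasureTheory.volume 0 1 ∧
    Filter.Tendsto (fun x => GH ((0:ℝ) :: bs) x) (nhdsWithin 1 (Set.Iio 1))
      (nhds (GH ((0:ℝ) :: bs) 1)) ∧
    ∀ n : ℕ, 1 ≤ n →
      ((∫ x in (0:ℝ)..1, (x ^ n - 1) * GH ms x / (1 - x)) =
        (∫ x in (0:ℝ)..1, x ^ n * (GH ms x - GH ms 1) / (1 - x)) -
        (∫ x in (0:ℝ)..1, (GH ms x - GH ms 1) / (1 - x)) -
        (∑ i ∈ Finset.Icc 1 n, (1 : ℝ) / i) * GH ms 1) ∧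
      ((∫ x in (0:ℝ)..1, (x ^ n - 1) * GH bs (1 - x) / (1 - x)) =
        (∫ x in (0:ℝ)..1, x ^ n * GH bs (1 - x) / (1 - x)) - GH ((0:ℝ) :: bs) 1) := by
  have hms_int := intervalIntegrable_GH_sub_GH_one_div_one_sub hm
  have hbs_int := intervalIntegrable_GHf_zero_mul_GH hb hbs hblast
  have hGH0 : GH ((0 : ℝ) :: bs) = fun x => ∫ t in (0 : ℝ)..x, GHf 0 t * GH bs t :=
    funext <| GH_cons_of_not_forall fun h =>
      hblast (h _ (List.mem_cons_of_mem _ (List.getLast_mem hbs)))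
  have hdiv : (fun u => GHf 0 u * GH bs u) = fun u => GH bs u / u := by
    ext u; rw [GHf_zero_s11, inv_mul_eq_div]
  refine ⟨(GH_bounds_of_forall_notMem_Ioc hm).1.tendsto_nhdsLT one_pos, hms_int, ?_,
    fun n _ => ⟨integral_pow_sub_one_mul_div_one_sub hms_int n, ?_⟩⟩
  · rw [hGH0]
    exact ((continuousOn_primitive_Icc zero_le_one hbs_int).mono
      Ioc_subset_Icc_self).tendsto_nhdsLT one_pos
  · rw [integral_pow_sub_one_mul_comp_div (hdiv ▸ hbs_int), hGH0, hdiv]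

/-- Regularized Mellin-transform identities at the pole `1/(1−x)`.
For a word `m⃗` with letters in `ℝ ∖ (0,1]` and a word `b⃗` with letters in
`ℝ ∖ ((−1,0) ∪ (0,1))` whose last letter is nonzero:
`H_{m⃗}(1)` is finite (i.e. `H_{m⃗}(x) → H_{m⃗}(1)` as `x → 1⁻`),
`∫_0^1 (H_{m⃗}(x) − H_{m⃗}(1))/(1−x) dx` is finite, `H_{0,b⃗}(1)` is finite, and
for every `n ≥ 1`:
(i) `∫_0^1 (xⁿ−1) H_{m⃗}(x)/(1−x) dx
  = ∫_0^1 xⁿ(H_{m⃗}(x)−H_{m⃗}(1))/(1−x) dx − ∫_0^1 (H_{m⃗}(x)−H_{m⃗}(1))/(1−x) dx − S₁(n)·H_{m⃗}(1)`;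
(ii) `∫_0^1 (xⁿ−1) H_{b⃗}(1−x)/(1−x) dx = ∫_0^1 xⁿ H_{b⃗}(1−x)/(1−x) dx − H_{0,b⃗}(1)`. -/
theorem gh_mellin_pole_one_regularization (ms : List ℝ) (hms : ms ≠ [])
    (hm : ∀ m ∈ ms, ¬ (0 < m ∧ m ≤ 1))
    (bs : List ℝ) (hbs : bs ≠ [])
    (hb : ∀ c ∈ bs, c ∉ Set.Ioo (-1:ℝ) 0 ∧ c ∉ Set.Ioo (0:ℝ) 1)
    (hblast : bs.getLast hbs ≠ 0) :
    Filter.Tendsto (fun x => GH ms x) (nhdsWithin 1 (Set.Iio 1)) (nhds (GH ms 1)) ∧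
    IntervalIntegrable (fun x => (GH ms x - GH ms 1) / (1 - x)) MeasureTheory.volume 0 1 ∧
    Filter.Tendsto (fun x => GH ((0:ℝ) :: bs) x) (nhdsWithin 1 (Set.Iio 1))
      (nhds (GH ((0:ℝ) :: bs) 1)) ∧
    ∀ n : ℕ, 1 ≤ n →
      ((∫ x in (0:ℝ)..1, (x ^ n - 1) * GH ms x / (1 - x)) =
        (∫ x in (0:ℝ)..1, x ^ n * (GH ms x - GH ms 1) / (1 - x)) -
        (∫ x in (0:ℝ)..1, (GH ms x - GH ms 1) / (1 - x)) -
        (∑ i ∈ Finset.Icc 1 n, (1 : ℝ) / i) * GH ms 1) ∧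
      ((∫ x in (0:ℝ)..1, (x ^ n - 1) * GH bs (1 - x) / (1 - x)) =
        (∫ x in (0:ℝ)..1, x ^ n * GH bs (1 - x) / (1 - x)) - GH ((0:ℝ) :: bs) 1) :=
  gh_mellin_pole_one_regularization_general ms hm bs hbs hb hblast
end

section
/- For every real d > 0 there exists a constant C > 0 such that for all complex numbers z with Re z ≥ 0 and all real x with 0 < x ≤ d: |(x^z − 1)/(x − 1)| ≤ C·(d+1)^{|z|}, where at x = 1 the quotient is interpreted as its limiting value z. -/
/-!
For `x ≤ 1/2` the quotient is at most `4`, because `‖x ^ z‖ ≤ 1` when `Re z ≥ 0`. For `x ≥ 1/2`,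
the mean value theorem for `exp` on the segment `[0, z log x]` gives
`‖x ^ z - 1‖ ≤ |log x| ‖z‖ max 1 (x ^ Re z)`, and `|log x| ≤ 2 |x - 1|` there, so the quotient is at
most `2 ‖z‖ (max 1 d) ^ ‖z‖`. The factor `‖z‖` is absorbed by the gap between `max 1 d` and `d + 1`:
`t m ^ t ≤ b ^ t / log (b / m)` whenever `0 < m < b`.
-/

theorem Complex.norm_exp_sub_one_le_norm_mul_max (w : ℂ) :
    ‖exp w - 1‖ ≤ ‖w‖ * max 1 (Real.exp w.re) := by
  have hderiv : ∀ u ∈ segment ℝ 0 w, ‖deriv exp u‖ ≤ max 1 (Real.exp w.re) := by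
    rintro _ ⟨s, t, hs, ht, hst, rfl⟩
    have hre : t * w.re ≤ max 0 w.re := by
      rcases le_total 0 w.re with h | h
      · exact (mul_le_of_le_one_left h (by linarith)).trans (le_max_right _ _)
      · exact (mul_nonpos_of_nonneg_of_nonpos ht h).trans (le_max_left _ _)
    rw [deriv_exp, norm_exp, ← Real.exp_zero, ← Real.exp_monotone.map_max]
    simpa using hre
  rw [mul_comm]
  simpa using (convex_segment 0 w).norm_image_sub_le_of_norm_deriv_le
    (fun u _ => differentiableAt_exp) hderiv (left_mem_segment ℝ 0 w) (right_mem_segment ℝ 0 w)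

theorem Complex.norm_ofReal_cpow_sub_one_le {x : ℝ} (hx : 0 < x) (z : ℂ) :
    ‖(x : ℂ) ^ z - 1‖ ≤ |Real.log x| * ‖z‖ * max 1 (x ^ z.re) := by
  have h := norm_exp_sub_one_le_norm_mul_max (Real.log x * z)
  rwa [norm_mul, norm_real, Real.norm_eq_abs, re_ofReal_mul, ← Real.rpow_def_of_pos hx,
    ofReal_log hx.le, ← cpow_def_of_ne_zero (ofReal_ne_zero.2 hx.ne')] at h

theorem Real.abs_log_le_two_mul_abs_sub_one {x : ℝ} (hx : 1 / 2 ≤ x) :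
    |log x| ≤ 2 * |x - 1| := by
  have hx0 : 0 < x := by linarith
  rcases le_total x 1 with h | h
  · have h' : 1 - x⁻¹ ≤ log x := one_sub_inv_le_log_of_pos hx0
    have hinv : x⁻¹ ≤ 2 := by rw [inv_le_comm₀ hx0 two_pos]; linarith
    rw [abs_of_nonpos (log_nonpos hx0.le h), abs_of_nonpos (by linarith)]
    nlinarith [inv_mul_cancel₀ hx0.ne']
  · rw [abs_of_nonneg (log_nonneg h), abs_of_nonneg (by linarith)]
    linarith [log_le_sub_one_of_pos hx0]

theorem Real.mul_rpow_le_rpow_div_log {m b : ℝ} (hm : 0 < m) (hmb : m < b)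
    (t : ℝ) : t * m ^ t ≤ b ^ t / log (b / m) := by
  have hq : 1 < b / m := (one_lt_div hm).2 hmb
  have hkey : t * log (b / m) ≤ (b / m) ^ t := by
    rw [rpow_def_of_pos (by linarith)]
    linarith [add_one_le_exp (log (b / m) * t), mul_comm t (log (b / m))]
  rw [le_div_iff₀ (log_pos hq)]
  calc t * m ^ t * log (b / m) = t * log (b / m) * m ^ t := by ring
    _ ≤ (b / m) ^ t * m ^ t := by gcongr
    _ = b ^ t := by rw [div_rpow (by linarith) hm.le, div_mul_cancel₀ _ (rpow_pos_of_pos hm t).ne']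

theorem max_one_rpow_re_le_max_one_rpow_norm {x : ℝ} (hx : 0 < x) {z : ℂ} (hz : 0 ≤ z.re) :
    max 1 (x ^ z.re) ≤ max 1 x ^ ‖z‖ := by
  have hbase : 1 ≤ max 1 x := le_max_left _ _
  refine max_le (Real.one_le_rpow hbase (norm_nonneg z)) ?_
  calc x ^ z.re ≤ max 1 x ^ z.re := Real.rpow_le_rpow hx.le (le_max_right _ _) hz
    _ ≤ max 1 x ^ ‖z‖ := Real.rpow_le_rpow_of_exponent_le hbase (Complex.re_le_norm z)

theorem norm_cpow_sub_one_div_sub_one_le_four {x : ℝ} (hx : 0 < x) (hx2 : x ≤ 1 / 2) {z : ℂ}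
    (hz : 0 ≤ z.re) : ‖((x : ℂ) ^ z - 1) / ((x : ℂ) - 1)‖ ≤ 4 := by
  have hnum : ‖(x : ℂ) ^ z - 1‖ ≤ 2 := by
    calc ‖(x : ℂ) ^ z - 1‖ ≤ ‖(x : ℂ) ^ z‖ + ‖(1 : ℂ)‖ := norm_sub_le _ _
      _ ≤ 1 + 1 := by
        rw [Complex.norm_cpow_eq_rpow_re_of_pos hx, norm_one]
        gcongr
        exact Real.rpow_le_one hx.le (by linarith) hz
      _ = 2 := by norm_num
  have hden : ‖(x : ℂ) - 1‖ = 1 - x := by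
    rw [← Complex.ofReal_one, ← Complex.ofReal_sub, Complex.norm_real, Real.norm_eq_abs,
      abs_of_neg (by linarith), neg_sub]
  rw [norm_div, hden, div_le_iff₀ (by linarith)]
  linarith

theorem norm_cpow_kernel_le_of_half_le {x : ℝ} (hx : 1 / 2 ≤ x) {z : ℂ} (hz : 0 ≤ z.re) :
    ‖if x = 1 then z else ((x : ℂ) ^ z - 1) / ((x : ℂ) - 1)‖ ≤ 2 * (‖z‖ * max 1 x ^ ‖z‖) := by
  have hx0 : 0 < x := by linarith
  have hpow : 1 ≤ max 1 x ^ ‖z‖ := Real.one_le_rpow (le_max_left _ _) (norm_nonneg z)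
  split_ifs with h1
  · nlinarith [norm_nonneg z]
  have hden : 0 < ‖(x : ℂ) - 1‖ := norm_pos_iff.2 (sub_ne_zero.2 (by exact_mod_cast h1))
  have hden' : ‖(x : ℂ) - 1‖ = |x - 1| := by
    rw [← Complex.ofReal_one, ← Complex.ofReal_sub, Complex.norm_real, Real.norm_eq_abs]
  rw [norm_div, div_le_iff₀ hden]
  calc ‖(x : ℂ) ^ z - 1‖ ≤ |Real.log x| * ‖z‖ * max 1 (x ^ z.re) :=
        Complex.norm_ofReal_cpow_sub_one_le hx0 z
    _ ≤ 2 * |x - 1| * ‖z‖ * max 1 x ^ ‖z‖ := by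
        gcongr
        · exact Real.abs_log_le_two_mul_abs_sub_one hx
        · exact max_one_rpow_re_le_max_one_rpow_norm hx0 hz
    _ = 2 * (‖z‖ * max 1 x ^ ‖z‖) * ‖(x : ℂ) - 1‖ := by rw [hden']; ring

/-- The key uniform estimate for the exponential type of `S`-sum integral
representations: for every `d > 0` there is a constant `C > 0` such that for all
`z ∈ ℂ` with `Re z ≥ 0` and all `0 < x ≤ d`,
`|(x^z − 1)/(x − 1)| ≤ C·(d+1)^{|z|}`, the quotient at `x = 1` being interpreted as
its limiting value `z`.  Here `x^z = e^{z log x}`. -/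
theorem cpow_kernel_uniform_bound (d : ℝ) (hd : 0 < d) :
    ∃ C : ℝ, 0 < C ∧ ∀ z : ℂ, 0 ≤ z.re → ∀ x : ℝ, 0 < x → x ≤ d →
      ‖if x = 1 then z else ((x : ℂ) ^ z - 1) / ((x : ℂ) - 1)‖ ≤ C * (d + 1) ^ ‖z‖ := by
  have hm : max 1 d < d + 1 := max_lt (by linarith) (by linarith)
  set L := Real.log ((d + 1) / max 1 d)
  have hL : 0 < L := Real.log_pos ((one_lt_div (by positivity)).2 hm)
  refine ⟨4 + 2 / L, by positivity, fun z hz x hx hxd => ?_⟩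
  have hpow : 1 ≤ (d + 1) ^ ‖z‖ := Real.one_le_rpow (by linarith) (norm_nonneg z)
  have hgap : 0 ≤ 2 / L * (d + 1) ^ ‖z‖ := by positivity
  rcases le_or_gt x (1 / 2) with hx2 | hx2
  · rw [if_neg (by linarith)]
    nlinarith [norm_cpow_sub_one_div_sub_one_le_four hx hx2 hz]
  · calc _ ≤ 2 * (‖z‖ * max 1 x ^ ‖z‖) := norm_cpow_kernel_le_of_half_le hx2.le hz
      _ ≤ 2 * (‖z‖ * max 1 d ^ ‖z‖) := by gcongr
      _ ≤ 2 * ((d + 1) ^ ‖z‖ / L) := by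
          gcongr
          exact Real.mul_rpow_le_rpow_div_log (by positivity) hm _
      _ ≤ _ := by rw [add_mul, mul_div_assoc', div_mul_eq_mul_div]; linarith
end

section
/- Let n be a nonnegative integer. (i) ∫_0^1 x^n · H_1(x) dx = (1/(n+1)^2) · (1 + (n+1)·S_1(n)), where H_1(x) = −log(1−x) and S_1(n) = Σ_{i=1}^{n} 1/i. (ii) For every real a > 1: ∫_0^1 x^n · H_a(x) dx = (1/(n+1)^2) · ( 1 + a^{n+1}(n+1)·S_1(1/a;n) − (a^{n+1}−1)(n+1)·S_1(1/a;∞) ), where H_a(x) = ∫_0^x dy/(a−y) = log(a/(a−x)) and S_1(1/a;∞) = Σ_{i=1}^{∞} a^{−i}/i. -/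
/-!
The substitution `x = a u` turns `∫₀¹ xⁿ log (a / (a - x)) dx` into
`a^(n+1) ∫₀^{1/a} uⁿ (-log (1 - u)) du`, so both parts follow from one primitive: for `0 ≤ t ≤ 1`,
`∫₀ᵗ uⁿ (-log (1 - u)) du = ((t^(n+1) - 1) (-log (1 - t)) + ∑_{k ≤ n} t^(k+1)/(k+1)) / (n+1)`.
Since `t^(n+1) - 1 = (1 + t + ⋯ + tⁿ)(t - 1)`, the logarithmic term is a multiple of
`(1 - t) log (1 - t)`, so the primitive is continuous up to `t = 1` and the fundamental theorem of
calculus applies across the singularity of the nonnegative integrand. Part (i) is `t = 1`; part (ii)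
is `t = 1/a`, where `-log (1 - 1/a) = S₁(1/a;∞)` is the logarithm series.
-/

open intervalIntegral Finset Real

lemma sum_range_succ_pow_succ_div (b : ℝ) (n : ℕ) :
    ∑ k ∈ range (n + 1), b ^ (k + 1) / ((k : ℝ) + 1) =
      ∑ i ∈ Icc 1 n, b ^ i / (i : ℝ) + b ^ (n + 1) / ((n : ℝ) + 1) := by
  induction n with
  | zero => simp
  | succ m ih =>
    rw [sum_range_succ, ih, sum_Icc_succ_top (by omega)]
    push_cast
    ring

lemma hasDerivAt_sum_range_pow_succ_div (m : ℕ) (u : ℝ) :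
    HasDerivAt (fun v : ℝ => ∑ k ∈ range m, v ^ (k + 1) / ((k : ℝ) + 1))
      (∑ k ∈ range m, u ^ k) u := by
  refine HasDerivAt.fun_sum fun k _ => ((hasDerivAt_pow (k + 1) u).div_const _).congr_deriv ?_
  push_cast
  field_simp

lemma pow_succ_sub_one_mul_neg_log_one_sub (n : ℕ) (u : ℝ) :
    (u ^ (n + 1) - 1) * -log (1 - u) = (∑ k ∈ range (n + 1), u ^ k) * ((1 - u) * log (1 - u)) := by
  rw [← geom_sum_mul]
  ring

lemma continuous_pow_succ_sub_one_mul_neg_log_one_sub (n : ℕ) :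
    Continuous fun u : ℝ => (u ^ (n + 1) - 1) * -log (1 - u) := by
  simp_rw [pow_succ_sub_one_mul_neg_log_one_sub]
  exact (continuous_finsetSum _ fun k _ => continuous_pow k).mul
    (continuous_mul_log.comp (continuous_const.sub continuous_id))

lemma hasDerivAt_pow_mul_neg_log_one_sub_antideriv (n : ℕ) {u : ℝ} (hu : u ≠ 1) :
    HasDerivAt (fun v : ℝ => ((v ^ (n + 1) - 1) * -log (1 - v) +
        ∑ k ∈ range (n + 1), v ^ (k + 1) / ((k : ℝ) + 1)) / ((n : ℝ) + 1))
      (u ^ n * -log (1 - u)) u := by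
  have h1u : 1 - u ≠ 0 := sub_ne_zero.mpr hu.symm
  have hu1 : u - 1 ≠ 0 := sub_ne_zero.mpr hu
  have hlog : HasDerivAt (fun v : ℝ => -log (1 - v)) (1 - u)⁻¹ u :=
    (((hasDerivAt_id u).const_sub 1).log h1u).neg.congr_deriv (by simp [neg_div])
  refine ((((hasDerivAt_pow (n + 1) u).sub_const 1).mul hlog).add
    (hasDerivAt_sum_range_pow_succ_div (n + 1) u)).div_const ((n : ℝ) + 1) |>.congr_deriv ?_
  rw [geom_sum_eq hu]
  field_simp
  push_cast
  ring

theorem integral_pow_mul_neg_log_one_sub (n : ℕ) {t : ℝ} (ht₀ : 0 ≤ t) (ht₁ : t ≤ 1) :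
    ∫ u in (0 : ℝ)..t, u ^ n * -log (1 - u) =
      ((t ^ (n + 1) - 1) * -log (1 - t) +
        ∑ k ∈ range (n + 1), t ^ (k + 1) / ((k : ℝ) + 1)) / ((n : ℝ) + 1) := by
  set F : ℝ → ℝ := fun v => ((v ^ (n + 1) - 1) * -log (1 - v) +
    ∑ k ∈ range (n + 1), v ^ (k + 1) / ((k : ℝ) + 1)) / ((n : ℝ) + 1)
  have hF : Continuous F := ((continuous_pow_succ_sub_one_mul_neg_log_one_sub n).add
    (continuous_finsetSum _ fun k _ => (continuous_pow (k + 1)).div_const _)).div_const _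
  have hderiv : ∀ u ∈ Set.Ioo 0 t, HasDerivAt F (u ^ n * -log (1 - u)) u := fun u hu =>
    hasDerivAt_pow_mul_neg_log_one_sub_antideriv n (hu.2.trans_le ht₁).ne
  have hnonneg : ∀ u ∈ Set.Ioo 0 t, 0 ≤ u ^ n * -log (1 - u) := fun u hu =>
    mul_nonneg (pow_nonneg hu.1.le n)
      (neg_nonneg.mpr (log_nonpos (by linarith [hu.2]) (by linarith [hu.1])))
  have hint : IntervalIntegrable (fun u : ℝ => u ^ n * -log (1 - u)) MeasureTheory.volume 0 t :=
    intervalIntegrable_deriv_of_nonneg hF.continuousOn (by simpa [ht₀] using hderiv)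
      (by simpa [ht₀] using hnonneg)
  rw [integral_eq_sub_of_hasDerivAt_of_le ht₀ hF.continuousOn hderiv hint]
  simp [F]

lemma integral_pow_mul_log_div_sub (n : ℕ) {a : ℝ} (ha : a ≠ 0) (s : ℝ) :
    ∫ x in (0 : ℝ)..s, x ^ n * log (a / (a - x)) =
      a ^ (n + 1) * ∫ u in (0 : ℝ)..s / a, u ^ n * -log (1 - u) := by
  have key : ∀ x : ℝ, x ^ n * log (a / (a - x)) = a ^ n * ((x / a) ^ n * -log (1 - x / a)) := by
    intro x
    rw [← log_inv, ← inv_div, one_sub_div ha, div_pow]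
    field_simp
  simp_rw [key, integral_const_mul, integral_comp_div (fun u => u ^ n * -log (1 - u)) ha]
  rw [zero_div, smul_eq_mul, pow_succ]
  ring

/-- Mellin transforms of weight-one generalized harmonic polylogarithms, for `n ≥ 0`:
(i) `∫_0^1 xⁿ·H₁(x) dx = (1/(n+1)²)·(1 + (n+1)·S₁(n))` with `H₁(x) = −log(1−x)` and
`S₁(n) = Σ_{i=1}^{n} 1/i`;
(ii) for `a > 1`,
`∫_0^1 xⁿ·H_a(x) dx = (1/(n+1)²)·(1 + a^{n+1}(n+1)·S₁(1/a;n) − (a^{n+1}−1)(n+1)·S₁(1/a;∞))`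
with `H_a(x) = log(a/(a−x))` and `S₁(1/a;∞) = Σ_{i=1}^{∞} a^{−i}/i`. -/
theorem mellin_weight_one (n : ℕ) :
    (∫ x in (0:ℝ)..1, x ^ n * (-Real.log (1 - x))) =
      (1 / ((n : ℝ) + 1) ^ 2) *
        (1 + ((n : ℝ) + 1) * ∑ i ∈ Finset.Icc 1 n, (1 : ℝ) / i) ∧
    ∀ a : ℝ, 1 < a →
      (∫ x in (0:ℝ)..1, x ^ n * Real.log (a / (a - x))) =
        (1 / ((n : ℝ) + 1) ^ 2) *
          (1 + a ^ (n + 1) * ((n : ℝ) + 1) * (∑ i ∈ Finset.Icc 1 n, (1 / a) ^ i / (i : ℝ))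
            - (a ^ (n + 1) - 1) * ((n : ℝ) + 1) *
                ∑' i : ℕ, (1 / a) ^ (i + 1) / ((i : ℝ) + 1)) := by
  refine ⟨?_, fun a ha => ?_⟩
  · rw [integral_pow_mul_neg_log_one_sub n zero_le_one le_rfl, sum_range_succ_pow_succ_div]
    simp only [one_pow, sub_self, zero_mul, zero_add]
    field_simp
    ring
  · have ha₀ : a ≠ 0 := by positivity
    have hinv : 1 / a < 1 := (div_lt_one (by positivity)).mpr ha
    have hinv_abs : |1 / a| < 1 := by rwa [abs_of_pos (by positivity)]
    rw [integral_pow_mul_log_div_sub n ha₀, integral_pow_mul_neg_log_one_sub n (by positivity) hinv.le,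
      sum_range_succ_pow_succ_div, (hasSum_pow_div_log_of_abs_lt_one hinv_abs).tsum_eq]
    have hpow : a ^ (n + 1) * (1 / a) ^ (n + 1) = 1 := by
      rw [← mul_pow, mul_one_div_cancel ha₀, one_pow]
    linear_combination (norm := skip) (-log (1 - 1 / a) + 1 / ((n : ℝ) + 1)) / ((n : ℝ) + 1) * hpow
    field_simp
    ring
end

section
/- Let m⃗ = (m_1,…,m_k) with m_i ∈ ℝ∖(0,1) be such that the generalized harmonic polylogarithm H_{m⃗}(x) is defined on (0,1) with ∫_0^1 |H_{m⃗}(x)| dx < ∞. Then for every nonnegative integer n: ∫_0^1 x^n · H_{1,m_1,…,m_k}(x) dx = (1/(n+1)) · Σ_{i=0}^{n} ∫_0^1 x^i · H_{m_1,…,m_k}(x) dx, where the left-hand integral exists as the limit of ∫_0^{ε} as ε → 1⁻. -/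
open scoped Classical
open MeasureTheory intervalIntegral Filter

/-!
Since `H_{1,m⃗}(x) = ∫₀ˣ H_{m⃗}(y)/(1-y) dy`, Fubini on the triangle `0 < y ≤ x ≤ 1` turns
`∫₀¹ xⁿ H_{1,m⃗}(x) dx` into `∫₀¹ (∫_y¹ xⁿ dx) H_{m⃗}(y)/(1-y) dy`, and
`(∫_y¹ xⁿ dx)/(1-y) = (1 + y + ⋯ + yⁿ)/(n+1)`. The pole of `1/(1-y)` is harmless: the weight
`∫_y¹ xⁿ dx ≤ 1 - y` cancels it, which is also what makes the kernel integrable on the triangle.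
-/

open Set

section LowerTriangle

variable {α E : Type*} [LinearOrder α] [Zero E] (F : α × α → E) (x y : α)

theorem indicator_le_apply_eq_indicator_Ici :
    {q : α × α | q.2 ≤ q.1}.indicator F (x, y) = (Ici y).indicator (fun x => F (x, y)) x := by
  simp only [indicator_apply, mem_Ici, mem_ofPred_eq]

theorem indicator_le_apply_eq_indicator_Iic :
    {q : α × α | q.2 ≤ q.1}.indicator F (x, y) = (Iic x).indicator (fun y => F (x, y)) y := by
  simp only [indicator_apply, mem_Iic, mem_ofPred_eq]

end LowerTriangle

section TriangleFubini

variable {E : Type*} [NormedAddCommGroup E] [NormedSpace ℝ E] {a b : ℝ} {w h : ℝ → ℝ}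

theorem setIntegral_Ioc_indicator_Ici {y : ℝ} (hy : y ∈ Ioc a b) (f : ℝ → E) :
    ∫ x in Ioc a b, (Ici y).indicator f x = ∫ x in y..b, f x := by
  have hinter : Ioc a b ∩ Ici y = Icc y b := by
    ext x
    simp only [mem_inter_iff, mem_Ioc, mem_Ici, mem_Icc]
    exact ⟨fun ⟨⟨_, hxb⟩, hyx⟩ => ⟨hyx, hxb⟩, fun ⟨hyx, hxb⟩ => ⟨⟨hy.1.trans_le hyx, hxb⟩, hyx⟩⟩
  rw [setIntegral_indicator measurableSet_Ici, hinter, integral_Icc_eq_integral_Ioc,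
    integral_of_le hy.2]

theorem setIntegral_Ioc_indicator_Iic {x : ℝ} (hx : x ∈ Ioc a b) (f : ℝ → E) :
    ∫ y in Ioc a b, (Iic x).indicator f y = ∫ y in a..x, f y := by
  rw [setIntegral_indicator measurableSet_Iic, Ioc_inter_Iic, inf_eq_right.2 hx.2,
    integral_of_le hx.1.le]

theorem integrable_indicator_le_mul (hw : IntegrableOn w (Ioc a b))
    (hh : AEStronglyMeasurable h (volume.restrict (Ioc a b)))
    (hwh : IntegrableOn (fun y => (∫ x in y..b, ‖w x‖) * h y) (Ioc a b)) :
    Integrable ({q : ℝ × ℝ | q.2 ≤ q.1}.indicator fun q => w q.1 * h q.2)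
      ((volume.restrict (Ioc a b)).prod (volume.restrict (Ioc a b))) := by
  have hmeas := (hw.aestronglyMeasurable.comp_fst.mul hh.comp_snd).indicator
    (measurableSet_le measurable_snd measurable_fst)
  refine (integrable_prod_iff' hmeas).2 ⟨Eventually.of_forall fun y => ?_, ?_⟩
  · simp only [indicator_le_apply_eq_indicator_Ici]
    exact (hw.mul_const (h y)).indicator measurableSet_Ici
  · refine hwh.norm.congr ?_
    filter_upwards [ae_restrict_mem measurableSet_Ioc] with y hy
    simp only [indicator_le_apply_eq_indicator_Ici, norm_indicator_eq_indicator_norm, Pi.mul_apply,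
      setIntegral_Ioc_indicator_Ici hy, norm_mul, intervalIntegral.integral_mul_const]
    rw [Real.norm_of_nonneg (intervalIntegral.integral_nonneg hy.2 fun _ _ => norm_nonneg _)]

theorem integral_Ioc_mul_integral_swap (hw : IntegrableOn w (Ioc a b))
    (hh : AEStronglyMeasurable h (volume.restrict (Ioc a b)))
    (hwh : IntegrableOn (fun y => (∫ x in y..b, ‖w x‖) * h y) (Ioc a b)) :
    IntegrableOn (fun x => w x * ∫ y in a..x, h y) (Ioc a b) ∧
      ∫ x in Ioc a b, w x * ∫ y in a..x, h y = ∫ y in Ioc a b, (∫ x in y..b, w x) * h y := by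
  have hF := integrable_indicator_le_mul hw hh hwh
  have hx : ∀ x ∈ Ioc a b,
      ∫ y in Ioc a b, {q : ℝ × ℝ | q.2 ≤ q.1}.indicator (fun q => w q.1 * h q.2) (x, y) =
        w x * ∫ y in a..x, h y := fun x hx => by
    simp only [indicator_le_apply_eq_indicator_Iic, setIntegral_Ioc_indicator_Iic hx,
      intervalIntegral.integral_const_mul]
  have hy : ∀ y ∈ Ioc a b,
      ∫ x in Ioc a b, {q : ℝ × ℝ | q.2 ≤ q.1}.indicator (fun q => w q.1 * h q.2) (x, y) =
        (∫ x in y..b, w x) * h y := fun y hy => by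
    simp only [indicator_le_apply_eq_indicator_Ici, setIntegral_Ioc_indicator_Ici hy,
      intervalIntegral.integral_mul_const]
  refine ⟨hF.integral_prod_left.congr ((ae_restrict_mem measurableSet_Ioc).mono hx), ?_⟩
  rw [← setIntegral_congr_fun measurableSet_Ioc hx, ← setIntegral_congr_fun measurableSet_Ioc hy]
  exact integral_integral_swap hF

end TriangleFubini

theorem GH_one_cons (p : List ℝ) (x : ℝ) :
    GH (1 :: p) x = ∫ y in (0:ℝ)..x, (1 - y)⁻¹ * GH p y := by
  simp [GH, GHf, one_div]

theorem integral_pow_mul_inv_one_sub (n : ℕ) {y : ℝ} (hy : y ≠ 1) :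
    (∫ x in y..1, x ^ n) * (1 - y)⁻¹ = 1 / (n + 1) * ∑ i ∈ Finset.range (n + 1), y ^ i := by
  have hy' : 1 - y ≠ 0 := sub_ne_zero.2 hy.symm
  rw [integral_pow, geom_sum_eq hy, one_pow]
  field_simp
  ring

theorem integral_Ioc_pow_mul_integral_inv_one_sub_mul {g : ℝ → ℝ}
    (hg : IntegrableOn g (Ioc 0 1)) (n : ℕ) :
    IntegrableOn (fun x => x ^ n * ∫ y in (0:ℝ)..x, (1 - y)⁻¹ * g y) (Ioc 0 1) ∧
      ∫ x in Ioc (0:ℝ) 1, x ^ n * ∫ y in (0:ℝ)..x, (1 - y)⁻¹ * g y =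
        1 / (n + 1) * ∑ i ∈ Finset.range (n + 1), ∫ x in Ioc (0:ℝ) 1, x ^ i * g x := by
  have hpow (i : ℕ) : IntegrableOn (fun y => y ^ i * g y) (Ioc 0 1) :=
    hg.continuousOn_mul_of_subset (continuous_pow i).continuousOn isCompact_Icc
      measurableSet_Ioc Ioc_subset_Icc_self
  have hgeom : ∀ᵐ y ∂volume.restrict (Ioc 0 1), (∫ x in y..1, x ^ n) * ((1 - y)⁻¹ * g y) =
      1 / (n + 1) * ∑ i ∈ Finset.range (n + 1), y ^ i * g y := by
    filter_upwards [ae_restrict_of_ae (Measure.ae_ne volume 1)] with y hy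
    rw [← mul_assoc, integral_pow_mul_inv_one_sub n hy, mul_assoc, Finset.sum_mul]
  have hnorm : ∀ y ∈ Ioc (0:ℝ) 1, ∫ x in y..1, ‖x ^ n‖ = ∫ x in y..1, x ^ n := fun y hy =>
    integral_congr fun x hx => Real.norm_of_nonneg <|
      pow_nonneg (hy.1.le.trans (uIcc_of_le hy.2 ▸ hx).1) n
  have hwh : IntegrableOn (fun y => (∫ x in y..1, ‖x ^ n‖) * ((1 - y)⁻¹ * g y)) (Ioc 0 1) := by
    have hsum : IntegrableOn
        (fun y => 1 / (n + 1) * ∑ i ∈ Finset.range (n + 1), y ^ i * g y) (Ioc 0 1) :=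
      (integrable_finsetSum _ fun i _ => hpow i).const_mul _
    refine hsum.congr ?_
    filter_upwards [ae_restrict_mem measurableSet_Ioc, hgeom] with y hy hgeom_y
    rw [hnorm y hy, hgeom_y]
  obtain ⟨hI, hswap⟩ := integral_Ioc_mul_integral_swap (h := fun y => (1 - y)⁻¹ * g y)
    (continuous_pow n).integrableOn_Ioc
    ((measurable_const.sub measurable_id).inv.aestronglyMeasurable.mul hg.aestronglyMeasurable)
    hwh
  refine ⟨hI, ?_⟩
  rw [hswap, integral_congr_ae hgeom, MeasureTheory.integral_const_mul,
    integral_finsetSum _ fun i _ => hpow i]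

theorem gh_mellin_leading_one_general (ms : List ℝ)
    (hint : IntervalIntegrable (fun x => GH ms x) MeasureTheory.volume 0 1)
    (n : ℕ) :
    IntervalIntegrable (fun x => x ^ n * GH ((1:ℝ) :: ms) x) MeasureTheory.volume 0 1 ∧
    (∫ x in (0:ℝ)..1, x ^ n * GH ((1:ℝ) :: ms) x) =
      (1 / ((n : ℝ) + 1)) * ∑ i ∈ Finset.range (n + 1), ∫ x in (0:ℝ)..1, x ^ i * GH ms x := by
  simp only [GH_one_cons, intervalIntegrable_iff_integrableOn_Ioc_of_le zero_le_one,
    integral_of_le zero_le_one] at hint ⊢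
  exact integral_Ioc_pow_mul_integral_inv_one_sub_mul hint n

/-- Mellin recursion for a leading letter `1`: if the letters of `m⃗` lie in
`ℝ ∖ (0,1)`, `H_{m⃗}` is defined on `(0,1)` and `∫_0^1 |H_{m⃗}(x)| dx < ∞`, then for
every `n ≥ 0` the integral `∫_0^1 xⁿ H_{1,m⃗}(x) dx` exists and
`∫_0^1 xⁿ H_{1,m⃗}(x) dx = (1/(n+1)) Σ_{i=0}^{n} ∫_0^1 xⁱ H_{m⃗}(x) dx`. -/
theorem gh_mellin_leading_one (ms : List ℝ) (hm : ∀ m ∈ ms, m ∉ Set.Ioo (0:ℝ) 1)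
    (hdef : ∀ x ∈ Set.Ioo (0:ℝ) 1, GHDef ms x)
    (hint : IntervalIntegrable (fun x => GH ms x) MeasureTheory.volume 0 1)
    (n : ℕ) :
    IntervalIntegrable (fun x => x ^ n * GH ((1:ℝ) :: ms) x) MeasureTheory.volume 0 1 ∧
    (∫ x in (0:ℝ)..1, x ^ n * GH ((1:ℝ) :: ms) x) =
      (1 / ((n : ℝ) + 1)) * ∑ i ∈ Finset.range (n + 1), ∫ x in (0:ℝ)..1, x ^ i * GH ms x :=
  gh_mellin_leading_one_general ms hint n
end

section
/- Let m be a positive integer, a_1,…,a_m positive integers, b_1,…,b_m positive real numbers, and n a positive integer. Then the duplication relation holds: Σ over all sign vectors (s_1,…,s_m) ∈ {−1,+1}^m of S_{a_m,…,a_1}(s_m·b_m,…,s_1·b_1; 2n) equals 2^{m − (a_1+⋯+a_m)} · S_{a_m,…,a_1}(b_m^2,…,b_1^2; n). -/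
open Finset

lemma sum_Icc_two_mul_of_odd_eq_zero {M : Type*} [AddCommMonoid M] (f : ℕ → M)
    (hf : ∀ i, Odd i → f i = 0) (n : ℕ) :
    ∑ i ∈ Icc 1 (2 * n), f i = ∑ j ∈ Icc 1 n, f (2 * j) := by
  induction n with
  | zero => simp
  | succ n ih =>
    rw [show 2 * (n + 1) = 2 * n + 1 + 1 by ring, sum_Icc_succ_top (by omega),
      sum_Icc_succ_top (by omega), ih, hf _ (odd_two_mul_add_one n), add_zero,
      sum_Icc_succ_top (by omega)]
    rfl

lemma sum_Icc_two_mul_pow_add_neg_pow (x : ℝ) (a : ℕ) (g : ℕ → ℝ) (n : ℕ) :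
    ∑ i ∈ Icc 1 (2 * n), (x ^ i + (-x) ^ i) / (i : ℝ) ^ a * g i =
      2 / 2 ^ a * ∑ j ∈ Icc 1 n, (x ^ 2) ^ j / (j : ℝ) ^ a * g (2 * j) := by
  rw [sum_Icc_two_mul_of_odd_eq_zero _ (fun i hi => by simp [hi.neg_pow]) n, mul_sum]
  refine sum_congr rfl fun j _ => ?_
  rw [(even_two_mul j).neg_pow, pow_mul, Nat.cast_mul, Nat.cast_two, mul_pow]
  ring

lemma Fintype.sum_fin_succ_pi {α M : Type*} [Fintype α] [AddCommMonoid M] {m : ℕ}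
    (f : (Fin (m + 1) → α) → M) :
    ∑ s, f s = ∑ t, ∑ s : Fin m → α, f (Fin.cons t s) := by
  rw [← (Fin.consEquiv _).sum_comp, Fintype.sum_prod_type]
  rfl

theorem sum_signs_Ssum_two_mul (m : ℕ) (a : Fin m → ℕ) (b : Fin m → ℝ) (n : ℕ) :
    ∑ s : Fin m → Bool, Ssum (List.ofFn fun i => (a i, if s i then b i else -b i)) (2 * n) =
      2 ^ m / 2 ^ (∑ i, a i) * Ssum (List.ofFn fun i => (a i, b i ^ 2)) n := by
  induction m generalizing n with
  | zero => simp [Ssum]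
  | succ m ih =>
    set T : ℕ → ℝ := fun i => ∑ s : Fin m → Bool,
      Ssum (List.ofFn fun k => (a k.succ, if s k then b k.succ else -b k.succ)) i
    have hT (j : ℕ) : T (2 * j) = _ := ih (fun k => a k.succ) (fun k => b k.succ) j
    calc _ = ∑ i ∈ Icc 1 (2 * n), (b 0 ^ i + (-b 0) ^ i) / (i : ℝ) ^ a 0 * T i := by
          simp only [Fintype.sum_fin_succ_pi, Fintype.sum_bool, List.ofFn_succ, Fin.cons_zero,
            Fin.cons_succ, Ssum, if_true, Bool.false_eq_true, if_false, ← sum_add_distrib, T, mul_sum]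
          rw [sum_comm]
          refine sum_congr rfl fun i _ => sum_congr rfl fun s _ => ?_
          ring
      _ = 2 / 2 ^ a 0 * ∑ j ∈ Icc 1 n, (b 0 ^ 2) ^ j / (j : ℝ) ^ a 0 * T (2 * j) :=
          sum_Icc_two_mul_pow_add_neg_pow _ _ _ _
      _ = _ := by
          rw [List.ofFn_succ, Ssum, Fin.sum_univ_succ, pow_succ, pow_add, mul_sum, mul_sum]
          refine sum_congr rfl fun j _ => ?_
          rw [hT]
          ring

theorem ssum_duplication_general (m : ℕ) (a : Fin m → ℕ) (b : Fin m → ℝ)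
    (ha : ∀ i, 1 ≤ a i) (n : ℕ) :
    (∑ s : Fin m → Bool,
        Ssum (List.ofFn fun i => (a i, if s i then b i else -b i)) (2 * n)) =
      (1 / (2 : ℝ) ^ ((∑ i, a i) - m)) * Ssum (List.ofFn fun i => (a i, b i ^ 2)) n := by
  have hm : m ≤ ∑ i, a i := by simpa using sum_le_sum fun i (_ : i ∈ univ) => ha i
  rw [sum_signs_Ssum_two_mul, pow_sub₀ _ two_ne_zero hm, ← div_eq_mul_inv, one_div_div]

/-- Duplication relation for `S`-sums: for positive integer weights `a_i`, positive
reals `b_i` and `n ≥ 1`, the sum over all `2^m` sign choices satisfies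
`Σ_{±} S_{a_m,…,a_1}(±b_m,…,±b_1;2n) = 2^{m − Σ a_i} · S_{a_m,…,a_1}(b_m²,…,b_1²;n)`. -/
theorem ssum_duplication (m : ℕ) (hm : 1 ≤ m) (a : Fin m → ℕ) (b : Fin m → ℝ)
    (ha : ∀ i, 1 ≤ a i) (hb : ∀ i, 0 < b i) (n : ℕ) (hn : 1 ≤ n) :
    (∑ s : Fin m → Bool,
        Ssum (List.ofFn fun i => (a i, if s i then b i else -b i)) (2 * n)) =
      (1 / (2 : ℝ) ^ ((∑ i, a i) - m)) * Ssum (List.ofFn fun i => (a i, b i ^ 2)) n :=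
  ssum_duplication_general m a b ha n
end
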